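/- arXiv:1401.7428 — 6 statements merged into one kernel-verified Lean document; each statement's English description precedes it below -/
import Mathlib

section
/- Let X be a real Banach space and let A : X ⇉ X* be ultramaximally monotone. Then the following four sets are equal: int(ran A), int(conv(ran A)), int(P_{X*}(dom F_A)), and int(P_{X*}(dom Φ_A)), where P_{X*} denotes the projection of X × X* (respectively X** × X*) onto the X* coordinate. -/
open Pointwise Set NormedSpace

variable {X : Type*} [NormedAddCommGroup X] [NormedSpace ℝ X]

/-- A set-valued operator `A : X ⇉ X*`, identified with its graph, is monotone. -/
def IsMonotoneOp (A : Set (X × StrongDual ℝ X)) : Prop :=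
  ∀ p ∈ A, ∀ q ∈ A, 0 ≤ (p.2 - q.2) (p.1 - q.1)

/-- `A` is maximally monotone: monotone and every monotonically related pair belongs to it. -/
def IsMaxMonotone (A : Set (X × StrongDual ℝ X)) : Prop :=
  IsMonotoneOp A ∧
    ∀ (x : X) (xs : StrongDual ℝ X), (∀ p ∈ A, 0 ≤ (xs - p.2) (x - p.1)) → (x, xs) ∈ A

/-- `A` is ultramaximally monotone: monotone, and maximally monotone with respect to
`X** × X*`. -/
def IsUltraMaxMonotone (A : Set (X × StrongDual ℝ X)) : Prop :=
  IsMonotoneOp A ∧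
    ∀ (xss : StrongDual ℝ (StrongDual ℝ X)) (xs : StrongDual ℝ X),
      (∀ p ∈ A, 0 ≤ (xss - inclusionInDoubleDual ℝ X p.1) (xs - p.2)) →
      ∃ x : X, xss = inclusionInDoubleDual ℝ X x ∧ (x, xs) ∈ A

/-- `A` is maximally monotone of type (NI): for every `(x**, x*)`,
`inf_{(a,a*) ∈ gra A} ⟨x* − a*, x** − â⟩ ≤ 0`. -/
def IsTypeNI (A : Set (X × StrongDual ℝ X)) : Prop :=
  IsMaxMonotone A ∧
    ∀ (xss : StrongDual ℝ (StrongDual ℝ X)) (xs : StrongDual ℝ X) (ε : ℝ), 0 < ε →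
      ∃ p ∈ A, (xss - inclusionInDoubleDual ℝ X p.1) (xs - p.2) < ε

def domOp (A : Set (X × StrongDual ℝ X)) : Set X := {x | ∃ xs, (x, xs) ∈ A}

def ranOp (A : Set (X × StrongDual ℝ X)) : Set (StrongDual ℝ X) := {xs | ∃ x, (x, xs) ∈ A}

/-- The sum `A + B`: `gra (A+B) = {(x, a* + b*) : (x,a*) ∈ gra A, (x,b*) ∈ gra B}`. -/
def sumOp (A B : Set (X × StrongDual ℝ X)) : Set (X × StrongDual ℝ X) :=
  {p | ∃ as bs, (p.1, as) ∈ A ∧ (p.1, bs) ∈ B ∧ p.2 = as + bs}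

/-- The Fitzpatrick function `F_A(x, x*) = sup_{(a,a*) ∈ gra A} (⟨x,a*⟩ + ⟨a,x*⟩ − ⟨a,a*⟩)`. -/
noncomputable def fitz (A : Set (X × StrongDual ℝ X)) : X × StrongDual ℝ X → EReal :=
  fun q => ⨆ p : A, ((p.1.2 q.1 + q.2 p.1.1 - p.1.2 p.1.1 : ℝ) : EReal)

/-- The extended Fitzpatrick function
`Φ_A(x**, x*) = sup_{(a,a*) ∈ gra A} (⟨a*,x**⟩ + ⟨a,x*⟩ − ⟨a,a*⟩)` on `X** × X*`. -/
noncomputable def phiFitz (A : Set (X × StrongDual ℝ X)) : StrongDual ℝ (StrongDual ℝ X) × StrongDual ℝ X → EReal :=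
  fun q => ⨆ p : A, ((q.1 p.1.2 + q.2 p.1.1 - p.1.2 p.1.1 : ℝ) : EReal)

/-- The Fenchel conjugate of the Fitzpatrick function,
`F_A*(x*, x**) = sup_{(y,y*)} (⟨y,x*⟩ + ⟨y*,x**⟩ − F_A(y,y*))`. -/
noncomputable def fitzConj (A : Set (X × StrongDual ℝ X)) :
    StrongDual ℝ X × StrongDual ℝ (StrongDual ℝ X) → EReal :=
  fun r => ⨆ q : X × StrongDual ℝ X, (((r.1 q.1 + r.2 q.2 : ℝ) : EReal) - fitz A q)


/-- `A` is maximally monotone of type (FPV). -/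
def IsFPV (A : Set (X × StrongDual ℝ X)) : Prop :=
  IsMaxMonotone A ∧
    ∀ U : Set X, IsOpen U → Convex ℝ U → (U ∩ domOp A).Nonempty →
      ∀ x ∈ U, ∀ xs : StrongDual ℝ X,
        (∀ p ∈ A, p.1 ∈ U → 0 ≤ (xs - p.2) (x - p.1)) → (x, xs) ∈ A

/-- `A` is rectangular: `dom A × ran A ⊆ dom F_A`. -/
def IsRectangular (A : Set (X × StrongDual ℝ X)) : Prop :=
  (domOp A) ×ˢ (ranOp A) ⊆ {q : X × StrongDual ℝ X | fitz A q < ⊤}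

/-- The graph of the duality map `J x = {x* : ⟨x,x*⟩ = ‖x‖² and ‖x*‖ = ‖x‖}`. -/
def dualityMapGraph : Set (X × StrongDual ℝ X) :=
  {p | p.2 p.1 = ‖p.1‖ ^ 2 ∧ ‖p.2‖ = ‖p.1‖}

/-- The partial inf-convolution `(F₁ □₂ F₂)(x, x*) = inf_{v*} (F₁(x, x* − v*) + F₂(x, v*))`. -/
noncomputable def infConv2 (F1 F2 : X × StrongDual ℝ X → EReal) : X × StrongDual ℝ X → EReal :=
  fun q => ⨅ v : StrongDual ℝ X, (F1 (q.1, q.2 - v) + F2 (q.1, v))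


/-!
The inclusions `ran A ⊆ conv (ran A) ⊆ P_{X*}(dom F_A) ⊆ P_{X*}(dom Φ_A)` are elementary: `F_A` is
a supremum of affine functions, finite on `gra A` by monotonicity, and `Φ_A` extends `F_A` along
`X → X**`. So everything rests on `int P_{X*}(dom Φ_A) ⊆ ran A`.

Let `x*` be such an interior point. The convex sets `{y* | Φ_A(y**, y*) ≤ n for some ‖y**‖ ≤ n}`,
closed by Banach–Alaoglu, cover a ball around `x*`, so by Baire's theorem one of them contains a
ball around `x*`. Testing the finite nonnegative combinations of points `(a, a*)` of `gra A`
against the functionals of this ball, and using monotonicity, bounds `∑ tᵢ ⟨aᵢ, aᵢ* - x*⟩` below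
by `-K ‖∑ tᵢ (aᵢ* - x*)‖`. A Hahn–Banach separation in `X* × ℝ` then produces `x** ∈ X**` with
`⟨a* - x*, x**⟩ ≤ ⟨a, a* - x*⟩` on `gra A`, i.e. `(x**, x*)` is monotonically related to `gra A`,
and ultramaximality gives `x* ∈ ran A`.
-/

open Metric

theorem EReal.lt_top_iff_exists_le_coe {x : EReal} : x < ⊤ ↔ ∃ M : ℝ, x ≤ M := by
  refine ⟨fun h => ?_, fun ⟨M, hM⟩ => hM.trans_lt (EReal.coe_lt_top M)⟩
  induction x with
  | bot => exact ⟨0, bot_le⟩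
  | coe x => exact ⟨x, le_rfl⟩
  | top => exact absurd h (lt_irrefl _)

theorem exists_ball_subset_of_isOpen_subset_iUnion {E : Type*} [PseudoMetricSpace E]
    [BaireSpace E] {F : ℕ → Set E} (hclosed : ∀ n, IsClosed (F n)) {U : Set E} (hU : IsOpen U)
    (hne : U.Nonempty) (hcover : U ⊆ ⋃ n, F n) : ∃ n z, ∃ ε > 0, ball z ε ⊆ F n := by
  have hdense := dense_iUnion_interior_of_closed (f := fun n => F n ∪ Uᶜ)
    (fun n => (hclosed n).union hU.isClosed_compl)
    (eq_univ_of_forall fun y => by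
      by_cases hy : y ∈ U
      · obtain ⟨n, hn⟩ := mem_iUnion.1 (hcover hy)
        exact mem_iUnion.2 ⟨n, Or.inl hn⟩
      · exact mem_iUnion.2 ⟨0, Or.inr hy⟩)
  obtain ⟨z, hzU, hz⟩ := hdense.inter_open_nonempty U hU hne
  obtain ⟨n, hzn⟩ := mem_iUnion.1 hz
  obtain ⟨ε, hε, hball⟩ := Metric.isOpen_iff.1 (isOpen_interior.inter hU) z ⟨hzn, hzU⟩
  refine ⟨n, z, ε, hε, fun y hy => ?_⟩
  obtain ⟨hyF, hyU⟩ := hball hy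
  exact (interior_subset hyF).resolve_right (not_not_intro hyU)

theorem nonneg_of_forall_le_mul {u a : ℝ} (h : ∀ μ, 0 ≤ μ → u ≤ μ * a) : 0 ≤ a := by
  by_contra! ha
  have hu : u ≤ 0 := by simpa using h 0 le_rfl
  have := h ((u - 1) / a) (div_nonneg_of_nonpos (by linarith) ha.le)
  rw [div_mul_cancel₀ _ ha.ne] at this
  linarith

section Baire

variable {E : Type*} [NormedAddCommGroup E] [NormedSpace ℝ E]

theorem Convex.ball_zero_subset_of_ball_subset {S : Set E} (hS : Convex ℝ S)
    (hneg : ∀ u ∈ S, -u ∈ S) {z : E} {ε : ℝ} (h : ball z ε ⊆ S) : ball 0 ε ⊆ S := by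
  intro u hu
  rw [mem_ball_zero_iff] at hu
  have hadd : z + u ∈ S := h (by simpa [dist_eq_norm] using hu)
  have hsub : -(z - u) ∈ S := hneg _ (h (by simpa [dist_eq_norm] using hu))
  convert hS hadd hsub (by norm_num : (0 : ℝ) ≤ 1 / 2) (by norm_num : (0 : ℝ) ≤ 1 / 2)
    (by norm_num) using 1
  module

theorem exists_ball_subset_of_ball_subset_iUnion [CompleteSpace E] {C : ℕ → Set E}
    (hmono : Monotone C) (hclosed : ∀ n, IsClosed (C n)) (hconv : ∀ n, Convex ℝ (C n))
    {x : E} {δ : ℝ} (hδ : 0 < δ) (hcover : ball x δ ⊆ ⋃ n, C n) :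
    ∃ n, ∃ ε > 0, ball x ε ⊆ C n := by
  -- symmetrising about `x` lets a ball anywhere in `S n` be traded for one centred at `0`
  set T : ℕ → Set E := fun n => (x + ·) ⁻¹' C n
  set S : ℕ → Set E := fun n => T n ∩ -T n
  have hS_cover : ball 0 δ ⊆ ⋃ n, S n := by
    intro u hu
    have hmem : ∀ v ∈ ball (0 : E) δ, ∃ n, x + v ∈ C n := fun v hv =>
      mem_iUnion.1 (hcover (by simpa [dist_eq_norm] using hv))
    obtain ⟨m, hm⟩ := hmem u hu
    obtain ⟨k, hk⟩ := hmem (-u) (by simpa using hu)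
    exact mem_iUnion.2 ⟨max m k, hmono (le_max_left m k) hm, hmono (le_max_right m k) hk⟩
  obtain ⟨n, z, ε, hε, hz⟩ := exists_ball_subset_of_isOpen_subset_iUnion
    (fun n => ((hclosed n).preimage (continuous_const_add x)).inter
      ((hclosed n).preimage (continuous_const_add x)).neg)
    isOpen_ball (nonempty_ball.2 hδ) hS_cover
  have h0 := ((hconv n).translate_preimage_right x |>.inter
    ((hconv n).translate_preimage_right x).neg).ball_zero_subset_of_ball_subset
    (fun u hu => ⟨hu.2, by simpa using hu.1⟩) hz
  refine ⟨n, ε, hε, fun y hy => ?_⟩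
  have := (h0 (show y - x ∈ ball 0 ε by simpa [dist_eq_norm] using hy)).1
  simpa using this

end Baire

/-- A Farkas-type lemma: the finite inequalities in the hypothesis make the cone spanned by the
points `(v i, c i)` disjoint from the open convex cone `{(u, s) | s + K ‖u‖ < 0}`, and a
separating functional, normalised on the `ℝ`-axis, gives `L`. -/
theorem exists_dual_le_of_combination_lower_bound {E ι : Type*} [NormedAddCommGroup E]
    [NormedSpace ℝ E] (v : ι → E) (c : ι → ℝ) {K : ℝ} (hK : 0 ≤ K)
    (h : ∀ (s : Finset ι) (t : ι → ℝ), (∀ i ∈ s, 0 ≤ t i) →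
      -K * ‖∑ i ∈ s, t i • v i‖ ≤ ∑ i ∈ s, t i * c i) :
    ∃ L : StrongDual ℝ E, ∀ i, L (v i) ≤ c i := by
  let T : (ι →₀ ℝ) →ₗ[ℝ] E × ℝ :=
    (Finsupp.linearCombination ℝ v).prod (Finsupp.linearCombination ℝ c)
  let C := T '' {l | ∀ i, 0 ≤ l i}
  let U := {q : E × ℝ | q.2 + K * ‖q.1‖ < 0}
  have hC : Convex ℝ C := by
    refine Convex.linear_image (fun l hl m hm a b ha hb _ i => ?_) T
    simpa using add_nonneg (mul_nonneg ha (hl i)) (mul_nonneg hb (hm i))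
  have hU : Convex ℝ U := by
    have hconv : ConvexOn ℝ univ fun q : E × ℝ => q.2 + K * ‖q.1‖ :=
      ((LinearMap.snd ℝ E ℝ).convexOn convex_univ).add
        (((convexOn_norm convex_univ).comp_linearMap (LinearMap.fst ℝ E ℝ)).smul hK)
    simpa using hconv.convex_lt 0
  have hUo : IsOpen U :=
    isOpen_lt (continuous_snd.add (continuous_const.mul continuous_fst.norm)) continuous_const
  have hdisj : Disjoint U C := by
    rw [Set.disjoint_left]
    rintro _ hU ⟨l, hl, rfl⟩
    have := h l.support l fun i _ => hl i
    simp [U, T, Finsupp.linearCombination_apply, Finsupp.sum] at hU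
    linarith
  obtain ⟨f, u, hfU, hfC⟩ := geometric_hahn_banach_open hU hUo hC hdisj
  have hu : u ≤ 0 := by simpa using hfC 0 ⟨0, fun _ => le_rfl, map_zero T⟩
  have hκ : 0 < f (0, 1) := by
    have := hfU (0, -1) (by simp [U])
    rw [show ((0 : E), (-1 : ℝ)) = -(0, 1) by simp, map_neg] at this
    linarith
  have hfvc : ∀ i, 0 ≤ f (v i, c i) := by
    intro i
    refine nonneg_of_forall_le_mul (u := u) fun μ hμ => ?_
    have := hfC _ ⟨Finsupp.single i μ, fun j => Finsupp.single_nonneg.2 hμ j, rfl⟩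
    simpa [T, ← smul_eq_mul, ← map_smul] using this
  refine ⟨-(f (0, 1))⁻¹ • f.comp (ContinuousLinearMap.inl ℝ E ℝ), fun i => ?_⟩
  have hsplit : f (v i, c i) = f (v i, 0) + c i * f (0, 1) := by
    rw [← smul_eq_mul, ← map_smul, ← map_add]
    simp
  have := hfvc i
  simp only [smul_apply, ContinuousLinearMap.comp_apply, ContinuousLinearMap.inl_apply,
    smul_eq_mul, neg_mul, neg_le]
  rw [le_inv_mul_iff₀ hκ]
  linarith

theorem sum_sum_mul_apply_sub_sub {ι : Type*} (s : Finset ι) (t : ι → ℝ) (x : ι → X)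
    (f : ι → StrongDual ℝ X) :
    ∑ i ∈ s, ∑ j ∈ s, t i * t j * (f i - f j) (x i - x j) =
      2 * ((∑ i ∈ s, t i) * ∑ i ∈ s, t i * f i (x i)) -
        2 * (∑ i ∈ s, t i • f i) (∑ i ∈ s, t i • x i) := by
  have hTS : (∑ i ∈ s, t i) * ∑ i ∈ s, t i * f i (x i) =
      ∑ i ∈ s, ∑ j ∈ s, t i * t j * f j (x j) := by
    simp only [Finset.sum_mul_sum, mul_assoc]
  have hWA : (∑ i ∈ s, t i • f i) (∑ i ∈ s, t i • x i) =
      ∑ i ∈ s, ∑ j ∈ s, t i * t j * f j (x i) := by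
    simp only [map_sum, sum_apply, map_smul, smul_apply, smul_eq_mul, Finset.mul_sum]
    exact Finset.sum_congr rfl fun i _ => Finset.sum_congr rfl fun j _ => by ring
  have hswap : ∑ i ∈ s, ∑ j ∈ s, t i * t j * f i (x j) =
      ∑ i ∈ s, ∑ j ∈ s, t i * t j * f j (x i) := by
    rw [Finset.sum_comm]
    exact Finset.sum_congr rfl fun i _ => Finset.sum_congr rfl fun j _ => by ring
  have hswap' : ∑ i ∈ s, ∑ j ∈ s, t i * t j * f i (x i) =
      ∑ i ∈ s, ∑ j ∈ s, t i * t j * f j (x j) := by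
    rw [Finset.sum_comm]
    exact Finset.sum_congr rfl fun i _ => Finset.sum_congr rfl fun j _ => by ring
  have hsplit : ∑ i ∈ s, ∑ j ∈ s, t i * t j * (f i - f j) (x i - x j) =
      ∑ i ∈ s, ∑ j ∈ s, t i * t j * f i (x i) - ∑ i ∈ s, ∑ j ∈ s, t i * t j * f j (x i) -
        ∑ i ∈ s, ∑ j ∈ s, t i * t j * f i (x j) + ∑ i ∈ s, ∑ j ∈ s, t i * t j * f j (x j) := by
    simp only [← Finset.sum_add_distrib, ← Finset.sum_sub_distrib]
    refine Finset.sum_congr rfl fun i _ => Finset.sum_congr rfl fun j _ => ?_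
    simp only [sub_apply, map_sub]
    ring
  rw [hsplit, hTS, hWA, hswap', hswap]
  ring

theorem weighted_pairing_le_of_monotone {ι : Type*} (s : Finset ι) {t : ι → ℝ}
    (ht : ∀ i ∈ s, 0 ≤ t i) (x : ι → X) (f : ι → StrongDual ℝ X)
    (hmono : ∀ i ∈ s, ∀ j ∈ s, 0 ≤ (f i - f j) (x i - x j)) :
    (∑ i ∈ s, t i • f i) (∑ i ∈ s, t i • x i) ≤ (∑ i ∈ s, t i) * ∑ i ∈ s, t i * f i (x i) := by
  have hpos : 0 ≤ ∑ i ∈ s, ∑ j ∈ s, t i * t j * (f i - f j) (x i - x j) :=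
    Finset.sum_nonneg fun i hi => Finset.sum_nonneg fun j hj =>
      mul_nonneg (mul_nonneg (ht i hi) (ht j hj)) (hmono i hi j hj)
  rw [sum_sum_mul_apply_sub_sub] at hpos
  linarith

section Fitzpatrick

variable {A : Set (X × StrongDual ℝ X)}

theorem fitz_le_coe_iff {q : X × StrongDual ℝ X} {M : ℝ} :
    fitz A q ≤ M ↔ ∀ p ∈ A, p.2 q.1 + q.2 p.1 - p.2 p.1 ≤ M := by
  simp only [fitz, iSup_le_iff, EReal.coe_le_coe_iff, Subtype.forall]

theorem phiFitz_le_coe_iff {q : StrongDual ℝ (StrongDual ℝ X) × StrongDual ℝ X} {M : ℝ} :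
    phiFitz A q ≤ M ↔ ∀ p ∈ A, q.1 p.2 + q.2 p.1 - p.2 p.1 ≤ M := by
  simp only [phiFitz, iSup_le_iff, EReal.coe_le_coe_iff, Subtype.forall]

theorem fitz_le_of_mem (hA : IsMonotoneOp A) {x : X} {xs : StrongDual ℝ X} (h : (x, xs) ∈ A) :
    fitz A (x, xs) ≤ (xs x : ℝ) :=
  fitz_le_coe_iff.2 fun p hp => by
    have := hA _ h p hp
    simp only [sub_apply, map_sub] at this
    linarith

theorem convex_dom_fitz (A : Set (X × StrongDual ℝ X)) :
    Convex ℝ {q : X × StrongDual ℝ X | fitz A q < ⊤} := by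
  intro q₁ h₁ q₂ h₂ a b ha hb hab
  obtain ⟨M₁, hM₁⟩ := EReal.lt_top_iff_exists_le_coe.1 h₁
  obtain ⟨M₂, hM₂⟩ := EReal.lt_top_iff_exists_le_coe.1 h₂
  refine EReal.lt_top_iff_exists_le_coe.2 ⟨a * M₁ + b * M₂, fitz_le_coe_iff.2 fun p hp => ?_⟩
  have e₁ := fitz_le_coe_iff.1 hM₁ p hp
  have e₂ := fitz_le_coe_iff.1 hM₂ p hp
  simp only [Prod.fst_add, Prod.snd_add, Prod.smul_fst, Prod.smul_snd, map_add, map_smul,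
    smul_eq_mul, add_apply, smul_apply]
  have hsplit : p.2 p.1 = a * p.2 p.1 + b * p.2 p.1 := by rw [← add_mul, hab, one_mul]
  linarith [mul_le_mul_of_nonneg_left e₁ ha, mul_le_mul_of_nonneg_left e₂ hb]

theorem convexHull_ranOp_subset_snd_dom_fitz (hA : IsMonotoneOp A) :
    convexHull ℝ (ranOp A) ⊆ Prod.snd '' {q : X × StrongDual ℝ X | fitz A q < ⊤} := by
  refine convexHull_min ?_ ((convex_dom_fitz A).linear_image (LinearMap.snd ℝ _ _))
  rintro xs ⟨x, h⟩
  exact ⟨(x, xs), (fitz_le_of_mem hA h).trans_lt (EReal.coe_lt_top _), rfl⟩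

theorem snd_dom_fitz_subset_snd_dom_phiFitz (A : Set (X × StrongDual ℝ X)) :
    Prod.snd '' {q : X × StrongDual ℝ X | fitz A q < ⊤} ⊆
      Prod.snd '' {q : StrongDual ℝ (StrongDual ℝ X) × StrongDual ℝ X | phiFitz A q < ⊤} := by
  rintro _ ⟨q, hq, rfl⟩
  exact ⟨(inclusionInDoubleDual ℝ X q.1, q.2), hq, rfl⟩

end Fitzpatrick

def phiLevel (A : Set (X × StrongDual ℝ X)) (n : ℝ) : Set (StrongDual ℝ X) :=
  {ys | ∃ yss : StrongDual ℝ (StrongDual ℝ X), ‖yss‖ ≤ n ∧ phiFitz A (yss, ys) ≤ n}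

theorem phiLevel_mono (A : Set (X × StrongDual ℝ X)) : Monotone (phiLevel A) :=
  fun _ _ hmn _ ⟨yss, hnorm, hphi⟩ =>
    ⟨yss, hnorm.trans hmn, hphi.trans (EReal.coe_le_coe_iff.2 hmn)⟩

theorem convex_phiLevel (A : Set (X × StrongDual ℝ X)) (n : ℝ) : Convex ℝ (phiLevel A n) := by
  rintro y₁ ⟨z₁, hz₁, h₁⟩ y₂ ⟨z₂, hz₂, h₂⟩ a b ha hb hab
  refine ⟨a • z₁ + b • z₂, ?_, phiFitz_le_coe_iff.2 fun p hp => ?_⟩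
  · simp only [← mem_closedBall_zero_iff (E := StrongDual ℝ (StrongDual ℝ X))] at hz₁ hz₂ ⊢
    exact convex_closedBall 0 n hz₁ hz₂ ha hb hab
  have e₁ := phiFitz_le_coe_iff.1 h₁ p hp
  have e₂ := phiFitz_le_coe_iff.1 h₂ p hp
  simp only [add_apply, smul_apply, smul_eq_mul]
  have hsplit : p.2 p.1 = a * p.2 p.1 + b * p.2 p.1 := by rw [← add_mul, hab, one_mul]
  have hn : (n : ℝ) = a * n + b * n := by rw [← add_mul, hab, one_mul]
  linarith [mul_le_mul_of_nonneg_left e₁ ha, mul_le_mul_of_nonneg_left e₂ hb]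

/-- Banach–Alaoglu: `phiLevel A n` is the projection of a closed subset of `K × X*`, where `K` is
the weak*-compact ball of radius `n` in `X**`. -/
theorem isClosed_phiLevel (A : Set (X × StrongDual ℝ X)) (n : ℝ) : IsClosed (phiLevel A n) := by
  let K := {φ : WeakDual ℝ (StrongDual ℝ X) | ‖WeakDual.toStrongDual φ‖ ≤ n}
  have : CompactSpace K := by
    refine isCompact_iff_compactSpace.1 ?_
    convert WeakDual.isCompact_closedBall (0 : StrongDual ℝ (StrongDual ℝ X)) n using 1
    ext φ
    exact (mem_closedBall_zero_iff (E := StrongDual ℝ (StrongDual ℝ X))).symm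
  have hproj : phiLevel A n = Prod.snd '' {q : K × StrongDual ℝ X |
      ∀ p ∈ A, (q.1 : WeakDual ℝ (StrongDual ℝ X)) p.2 + q.2 p.1 - p.2 p.1 ≤ n} := by
    ext ys
    constructor
    · rintro ⟨yss, hnorm, hphi⟩
      exact ⟨(⟨StrongDual.toWeakDual yss, hnorm⟩, ys), phiFitz_le_coe_iff.1 hphi, rfl⟩
    · rintro ⟨⟨⟨yss, hnorm⟩, ys⟩, hq, rfl⟩
      exact ⟨WeakDual.toStrongDual yss, hnorm, phiFitz_le_coe_iff.2 hq⟩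
  rw [hproj]
  refine isClosedMap_snd_of_compactSpace _ ?_
  simp only [ofPred_forall]
  refine isClosed_biInter fun p _ => isClosed_le ?_ continuous_const
  exact (((WeakDual.eval_continuous p.2).comp (continuous_subtype_val.comp continuous_fst)).add
    ((ContinuousLinearMap.apply ℝ ℝ p.1).continuous.comp continuous_snd)).sub continuous_const

theorem snd_dom_phiFitz_subset_iUnion_phiLevel (A : Set (X × StrongDual ℝ X)) :
    Prod.snd '' {q : StrongDual ℝ (StrongDual ℝ X) × StrongDual ℝ X | phiFitz A q < ⊤} ⊆
      ⋃ n : ℕ, phiLevel A n := by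
  rintro _ ⟨q, hq, rfl⟩
  obtain ⟨M, hM⟩ := EReal.lt_top_iff_exists_le_coe.1 hq
  obtain ⟨n, hn⟩ := exists_nat_ge (max ‖q.1‖ M)
  exact mem_iUnion.2 ⟨n, q.1, (le_max_left _ _).trans hn,
    hM.trans (by exact_mod_cast (le_max_right _ _).trans hn)⟩

section CombinationBounds

variable {A : Set (X × StrongDual ℝ X)} {xs : StrongDual ℝ X} {r N : ℝ}

theorem exists_bound_of_add_mem_phiLevel {vs : StrongDual ℝ X} (h : xs + vs ∈ phiLevel A N) :
    ∃ yss : StrongDual ℝ (StrongDual ℝ X), ‖yss‖ ≤ N ∧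
      ∀ p ∈ A, yss (p.2 - xs) + vs p.1 - N * (1 + ‖xs‖) ≤ (p.2 - xs) p.1 := by
  obtain ⟨yss, hnorm, hphi⟩ := h
  refine ⟨yss, hnorm, fun p hp => ?_⟩
  have hp := phiFitz_le_coe_iff.1 hphi p hp
  have hxs : -(N * ‖xs‖) ≤ yss xs :=
    neg_le_of_abs_le ((yss.le_opNorm xs).trans (by gcongr))
  simp only [map_sub, sub_apply, add_apply] at hp ⊢
  linarith

theorem combination_estimate_of_closedBall_subset_phiLevel (hr : 0 ≤ r)
    (hball : closedBall xs r ⊆ phiLevel A N) {ι : Type*} (s : Finset ι) {t : ι → ℝ}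
    (ht : ∀ i ∈ s, 0 ≤ t i) (a : ι → X × StrongDual ℝ X) (ha : ∀ i ∈ s, a i ∈ A) :
    r * ‖∑ i ∈ s, t i • (a i).1‖ - N * ‖∑ i ∈ s, t i • ((a i).2 - xs)‖ -
        (∑ i ∈ s, t i) * (N * (1 + ‖xs‖)) ≤ ∑ i ∈ s, t i * ((a i).2 - xs) (a i).1 := by
  set abar := ∑ i ∈ s, t i • (a i).1
  set w := ∑ i ∈ s, t i • ((a i).2 - xs)
  obtain ⟨g, hg, hgabar⟩ := exists_dual_vector'' ℝ abar
  have hmem : xs + r • g ∈ closedBall xs r := by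
    rw [mem_closedBall, dist_eq_norm, add_sub_cancel_left, norm_smul, Real.norm_of_nonneg hr]
    exact mul_le_of_le_one_right hr hg
  obtain ⟨yss, hnorm, hyss⟩ := exists_bound_of_add_mem_phiLevel (hball hmem)
  have hsum : ∑ i ∈ s, t i * (yss ((a i).2 - xs) + (r • g) (a i).1 - N * (1 + ‖xs‖)) =
      yss w + (r • g) abar - (∑ i ∈ s, t i) * (N * (1 + ‖xs‖)) := by
    simp only [w, abar, map_sum, map_smul, smul_eq_mul, mul_add, mul_sub, Finset.sum_add_distrib,
      Finset.sum_sub_distrib, Finset.sum_mul]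
  have hrg : (r • g) abar = r * ‖abar‖ := by rw [smul_apply, hgabar, smul_eq_mul]; rfl
  have hw : -(N * ‖w‖) ≤ yss w := neg_le_of_abs_le ((yss.le_opNorm w).trans (by gcongr))
  have hle := Finset.sum_le_sum fun i hi =>
    mul_le_mul_of_nonneg_left (hyss (a i) (ha i hi)) (ht i hi)
  linarith

theorem combination_lower_bound_of_closedBall_subset_phiLevel (hA : IsMonotoneOp A) (hr : 0 < r)
    (hN : 0 ≤ N) (hball : closedBall xs r ⊆ phiLevel A N) {ι : Type*} (s : Finset ι) {t : ι → ℝ}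
    (ht : ∀ i ∈ s, 0 ≤ t i) (a : ι → X × StrongDual ℝ X) (ha : ∀ i ∈ s, a i ∈ A) :
    -max N (N * (1 + ‖xs‖) / r) * ‖∑ i ∈ s, t i • ((a i).2 - xs)‖ ≤
      ∑ i ∈ s, t i * ((a i).2 - xs) (a i).1 := by
  set K := max N (N * (1 + ‖xs‖) / r)
  set T := ∑ i ∈ s, t i
  set abar := ∑ i ∈ s, t i • (a i).1
  set w := ∑ i ∈ s, t i • ((a i).2 - xs)
  set σ := ∑ i ∈ s, t i * ((a i).2 - xs) (a i).1
  have hbound : r * ‖abar‖ - N * ‖w‖ - T * (N * (1 + ‖xs‖)) ≤ σ :=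
    combination_estimate_of_closedBall_subset_phiLevel hr.le hball s ht a ha
  have hmono : w abar ≤ T * σ := weighted_pairing_le_of_monotone s ht _ _ fun i hi j hj => by
    simpa only [sub_sub_sub_cancel_right] using hA _ (ha i hi) _ (ha j hj)
  have hNK : N ≤ K := le_max_left _ _
  -- for large `‖abar‖` the functionals of the ball control `σ`; for small `‖abar‖`, monotonicity
  rcases le_or_gt (T * (N * (1 + ‖xs‖))) (r * ‖abar‖) with hfar | hnear
  · nlinarith [norm_nonneg w]
  · have habar : ‖abar‖ ≤ T * K := by
      have : ‖abar‖ ≤ T * (N * (1 + ‖xs‖) / r) := by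
        rw [mul_div_assoc', le_div_iff₀ hr]; linarith
      exact this.trans (mul_le_mul_of_nonneg_left (le_max_right _ _) (Finset.sum_nonneg ht))
    have hT : 0 < T := by
      by_contra! h
      have hN₂ : 0 ≤ N * (1 + ‖xs‖) := mul_nonneg hN (by positivity)
      nlinarith [mul_nonneg hr.le (norm_nonneg abar)]
    have hwabar : -(‖w‖ * ‖abar‖) ≤ w abar := neg_le_of_abs_le (w.le_opNorm abar)
    have : T * (-K * ‖w‖) ≤ T * σ := by nlinarith [norm_nonneg w]
    exact le_of_mul_le_mul_left this hT

end CombinationBounds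

theorem IsUltraMaxMonotone.mem_ranOp_of_dual_le {A : Set (X × StrongDual ℝ X)}
    (hA : IsUltraMaxMonotone A) {xs : StrongDual ℝ X} {L : StrongDual ℝ (StrongDual ℝ X)}
    (hL : ∀ p ∈ A, L (p.2 - xs) ≤ (p.2 - xs) p.1) : xs ∈ ranOp A := by
  obtain ⟨x, -, hx⟩ := hA.2 L xs fun p hp => by
    have := hL p hp
    simp only [sub_apply, map_sub, dual_def] at this ⊢
    linarith
  exact ⟨x, hx⟩

theorem interior_snd_dom_phiFitz_subset_ranOp {A : Set (X × StrongDual ℝ X)}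
    (hA : IsUltraMaxMonotone A) :
    interior (Prod.snd '' {q : StrongDual ℝ (StrongDual ℝ X) × StrongDual ℝ X | phiFitz A q < ⊤})
      ⊆ ranOp A := by
  intro xs hxs
  obtain ⟨δ, hδ, hball⟩ := Metric.isOpen_iff.1 isOpen_interior xs hxs
  obtain ⟨n, ε, hε, hεball⟩ := exists_ball_subset_of_ball_subset_iUnion
    ((phiLevel_mono A).comp Nat.mono_cast) (fun n => isClosed_phiLevel A n)
    (fun n => convex_phiLevel A n) hδ
    (hball.trans (interior_subset.trans (snd_dom_phiFitz_subset_iUnion_phiLevel A)))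
  obtain ⟨L, hL⟩ := exists_dual_le_of_combination_lower_bound (ι := A) (fun p => p.1.2 - xs)
    (fun p => (p.1.2 - xs) p.1.1) (le_max_of_le_left (Nat.cast_nonneg n)) fun s t ht =>
      combination_lower_bound_of_closedBall_subset_phiLevel hA.1 (half_pos hε)
        (Nat.cast_nonneg n) ((closedBall_subset_ball (half_lt_self hε)).trans hεball) s ht
        Subtype.val fun i _ => i.2
  exact hA.mem_ranOp_of_dual_le fun p hp => hL ⟨p, hp⟩

theorem stmt1_general (A : Set (X × StrongDual ℝ X)) (hA : IsUltraMaxMonotone A) :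
    interior (ranOp A) = interior (convexHull ℝ (ranOp A)) ∧
    interior (ranOp A) = interior (Prod.snd '' {q : X × StrongDual ℝ X | fitz A q < ⊤}) ∧
    interior (ranOp A) =
      interior (Prod.snd '' {q : StrongDual ℝ (StrongDual ℝ X) × StrongDual ℝ X | phiFitz A q < ⊤}) := by
  have h₁ : interior (ranOp A) ⊆ interior (convexHull ℝ (ranOp A)) :=
    interior_mono (subset_convexHull ℝ _)
  have h₂ := interior_mono (convexHull_ranOp_subset_snd_dom_fitz hA.1)
  have h₃ := interior_mono (snd_dom_fitz_subset_snd_dom_phiFitz A)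
  have h₄ := interior_maximal (interior_snd_dom_phiFitz_subset_ranOp hA) isOpen_interior
  exact ⟨h₁.antisymm (h₂.trans (h₃.trans h₄)), (h₁.trans h₂).antisymm (h₃.trans h₄),
    (h₁.trans (h₂.trans h₃)).antisymm h₄⟩

theorem stmt1 [CompleteSpace X] (A : Set (X × StrongDual ℝ X)) (hA : IsUltraMaxMonotone A) :
    interior (ranOp A) = interior (convexHull ℝ (ranOp A)) ∧
    interior (ranOp A) = interior (Prod.snd '' {q : X × StrongDual ℝ X | fitz A q < ⊤}) ∧
    interior (ranOp A) =
      interior (Prod.snd '' {q : StrongDual ℝ (StrongDual ℝ X) × StrongDual ℝ X | phiFitz A q < ⊤}) :=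
  stmt1_general A hA
end

section
/- Let X be a real Banach space and let A : X ⇉ X* be ultramaximally monotone. Then the following four sets are equal: the norm closure of ran A, the norm closure of conv(ran A), the norm closure of P_{X*}(dom F_A), and the norm closure of P_{X*}(dom Φ_A), where P_{X*} denotes the projection of X × X* (respectively X** × X*) onto the X* coordinate. -/
/-!
The inclusions `ran A ⊆ conv (ran A) ⊆ P(dom F_A) ⊆ P(dom Φ_A)` hold for every monotone `A`,
since `F_A` is a supremum of affine functions and `Φ_A` extends `F_A`. Ultramaximality makes `A`
of type (NI): `Φ_A(x**, x*) ≥ ⟨x*, x**⟩`. So no point of `P(dom Φ_A)` can be strictly separated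
from `conv (ran A)` by some `ℓ ∈ X**`: moving `x**` along `ℓ` would make the pairing grow faster
than `Φ_A`.

For `P(dom F_A) ⊆ cl (ran A)` we prove a Brøndsted–Rockafellar property. Let `z = (x, x*)` have
gap `F_A(z) - ⟨x, x*⟩ ≤ ε`. Ekeland's principle for the gap, in the norm
`max (‖·‖/P) (‖·‖/Q)`, gives a nearby point `(y, y*)`, and a Hahn–Banach sandwich at it gives
`(v, v**) ∈ X* × X**` of norms `≤ ε/P` and `≤ ε/Q`; (NI) at `(ŷ + v**, y* + v)` bounds the gap
of `(y, y*)` by `-v**(v) ≤ ε²/(PQ)`. Iterating with geometrically shrinking `P` and `Q` gives a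
Cauchy sequence whose limit has gap `0`, hence lies in `gra A`, with dual component as close to
`x*` as we wish.
-/

open Pointwise Set NormedSpace

variable {X : Type*} [NormedAddCommGroup X] [NormedSpace ℝ X]

open Filter Topology

section Ekeland

variable {M : Type*} [MetricSpace M] {f : M → ℝ} {σ : ℝ}

theorem add_mul_dist_le_trans (hσ : 0 ≤ σ) {z w u : M} (hw : f w + σ * dist w z ≤ f z)
    (hu : f u + σ * dist u w ≤ f w) : f u + σ * dist u z ≤ f z := by
  nlinarith [dist_triangle u w z]

theorem exists_seq_add_mul_dist_le (hbdd : BddBelow (range f)) (z₀ : M) :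
    ∃ u : ℕ → M, u 0 = z₀ ∧ ∀ n, f (u (n + 1)) + σ * dist (u (n + 1)) (u n) ≤ f (u n) ∧
      ∀ w, f w + σ * dist w (u n) ≤ f (u n) → f (u (n + 1)) ≤ f w + (1 / 2) ^ n := by
  have step (n : ℕ) (z : M) : ∃ z', f z' + σ * dist z' z ≤ f z ∧
      ∀ w, f w + σ * dist w z ≤ f z → f z' ≤ f w + (1 / 2) ^ n := by
    have hne : (f '' {w | f w + σ * dist w z ≤ f z}).Nonempty := ⟨f z, z, by simp, rfl⟩
    obtain ⟨_, ⟨z', hz', rfl⟩, hlt⟩ :=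
      Real.lt_sInf_add_pos hne (by positivity : (0 : ℝ) < (1 / 2) ^ n)
    refine ⟨z', hz', fun w hw => hlt.le.trans ?_⟩
    gcongr
    exact csInf_le (hbdd.mono (image_subset_range _ _)) ⟨w, hw, rfl⟩
  choose next hnext using step
  exact ⟨fun n => Nat.rec z₀ next n, rfl, fun n => hnext n _⟩

/-- Ekeland's variational principle. -/
theorem LowerSemicontinuous.exists_forall_le_add_mul_dist [CompleteSpace M]
    (hf : LowerSemicontinuous f) (hbdd : BddBelow (range f)) (hσ : 0 < σ) (z₀ : M) :
    ∃ w, f w + σ * dist w z₀ ≤ f z₀ ∧ ∀ z, f w ≤ f z + σ * dist z w := by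
  obtain ⟨u, rfl, hu⟩ := exists_seq_add_mul_dist_le (σ := σ) hbdd z₀
  choose hdrop hmin using hu
  have hchain : ∀ n m, n ≤ m → f (u m) + σ * dist (u m) (u n) ≤ f (u n) := by
    intro n m hnm
    induction m, hnm using Nat.le_induction with
    | base => simp
    | succ m _ ih => exact add_mul_dist_le_trans hσ.le ih (hdrop m)
  have hgeom : Tendsto (fun n : ℕ => ((1 : ℝ) / 2) ^ n) atTop (𝓝 0) :=
    tendsto_pow_atTop_nhds_zero_of_lt_one (by norm_num) (by norm_num)
  have hcauchy : CauchySeq fun n => u (n + 1) := by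
    refine cauchySeq_of_le_tendsto_0' (fun n => (1 / 2) ^ n / σ) (fun n m hnm => ?_)
      (by simpa using hgeom.div_const σ)
    rw [le_div_iff₀ hσ, dist_comm]
    have := hchain (n + 1) (m + 1) (by omega)
    have := hmin n (u (m + 1)) (hchain n (m + 1) (by omega))
    linarith
  obtain ⟨w, hw⟩ := cauchySeq_tendsto_of_complete hcauchy
  have hwS (n : ℕ) : f w + σ * dist w (u n) ≤ f (u n) := by
    have hclosed : IsClosed {w | f w + σ * dist w (u n) ≤ f (u n)} :=
      (hf.add (continuous_const.mul (continuous_id.dist continuous_const)).lowerSemicontinuous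
        ).isClosed_preimage (f (u n))
    exact hclosed.mem_of_tendsto hw
      (eventually_atTop.2 ⟨n, fun m hm => hchain n (m + 1) (by omega)⟩)
  refine ⟨w, hwS 0, fun z => ?_⟩
  by_contra! hz
  have hwz : f w ≤ f z := by
    have hlim : Tendsto (fun n : ℕ => f z + (1 / 2) ^ n) atTop (𝓝 (f z)) := by
      simpa using tendsto_const_nhds.add hgeom
    refine ge_of_tendsto' hlim fun n => ?_
    have := hwS (n + 1)
    have := hmin n z (add_mul_dist_le_trans hσ.le (hwS n) hz.le)
    nlinarith [dist_nonneg (x := w) (y := u (n + 1))]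
  nlinarith [dist_nonneg (x := z) (y := w)]

theorem LowerSemicontinuous.exists_forall_le_add_mul_norm_apply {E : Type*}
    [NormedAddCommGroup E] [NormedSpace ℝ E] [CompleteSpace E] {f : E → ℝ}
    (hf : LowerSemicontinuous f) (hbdd : BddBelow (range f)) (Λ : E ≃L[ℝ] E) (hσ : 0 < σ)
    (z₀ : E) :
    ∃ w, f w + σ * ‖Λ (w - z₀)‖ ≤ f z₀ ∧ ∀ z, f w ≤ f z + σ * ‖Λ (z - w)‖ := by
  obtain ⟨w, h₀, hw⟩ := (hf.comp Λ.symm.continuous).exists_forall_le_add_mul_dist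
    (hbdd.mono (range_comp_subset_range _ _)) hσ (Λ z₀)
  refine ⟨Λ.symm w, ?_, fun z => ?_⟩
  · simpa [dist_eq_norm] using h₀
  · simpa [dist_eq_norm] using hw (Λ z)

end Ekeland

theorem exists_seq_of_forall_exists {α : Type*} {p : ℕ → α → Prop} {R : ℕ → α → α → Prop}
    {a : α} (h₀ : p 0 a) (step : ∀ n x, p n x → ∃ y, p (n + 1) y ∧ R n x y) :
    ∃ u : ℕ → α, u 0 = a ∧ ∀ n, p n (u n) ∧ R n (u n) (u (n + 1)) := by
  choose next hnext using step
  let v (n : ℕ) : {x // p n x} :=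
    Nat.rec ⟨a, h₀⟩ (fun n x => ⟨next n x x.2, (hnext n x x.2).1⟩) n
  refine ⟨fun n => (v n).1, rfl, fun n => ⟨(v n).2, ?_⟩⟩
  exact (hnext n _ (v n).2).2

theorem exists_dual_le_of_forall_neg_le {E : Type*} [NormedAddCommGroup E] [NormedSpace ℝ E]
    {K : Set (E × ℝ)} (hK : Convex ℝ K) (h0 : ((0 : E), (0 : ℝ)) ∈ K) {p : E → ℝ}
    (hp : ConvexOn ℝ univ p) (hpc : Continuous p) (hp0 : p 0 = 0)
    (hKp : ∀ x ∈ K, -p x.1 ≤ x.2) :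
    ∃ g : StrongDual ℝ E, (∀ x ∈ K, g x.1 ≤ x.2) ∧ ∀ e, -p e ≤ g e := by
  set O : Set (E × ℝ) := {x | x.2 < -p x.1}
  have hOopen : IsOpen O := isOpen_lt continuous_snd (hpc.comp continuous_fst).neg
  have hOconv : Convex ℝ O := by
    have hq : ConvexOn ℝ univ fun x : E × ℝ => p x.1 + x.2 :=
      ⟨convex_univ, fun x _ y _ a b ha hb hab => by
        have := hp.2 (mem_univ x.1) (mem_univ y.1) ha hb hab
        simp only [Prod.fst_add, Prod.snd_add, Prod.smul_fst, Prod.smul_snd, smul_eq_mul]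
          at this ⊢
        linarith⟩
    have hO : O = {x | x ∈ univ ∧ p x.1 + x.2 < 0} := by
      ext x
      simp only [O, mem_ofPred_eq, mem_univ, true_and]
      constructor <;> intro <;> linarith
    exact hO ▸ hq.convex_lt 0
  have hdisj : Disjoint O K := disjoint_left.2 fun x hxO hxK => (hKp x hxK).not_gt hxO
  -- the separating functional has positive `ℝ`-component `c`, and its level `u` is `0`
  obtain ⟨L, u, hLO, hLK⟩ := geometric_hahn_banach_open hOconv hOopen hK hdisj
  set c := L (0, 1)
  have hL (e : E) (s : ℝ) : L (e, s) = L (e, 0) + s * c := by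
    rw [← smul_eq_mul, ← map_smul, ← map_add]
    simp
  have hL0 : L (0, 0) = 0 := by rw [Prod.mk_zero_zero, map_zero]
  have hu : u ≤ 0 := hL0 ▸ hLK _ h0
  have hc : 0 < c := by
    have := hLO (0, -1) (by simp [O, hp0])
    rw [hL, hL0] at this
    linarith
  have hu' : 0 ≤ u := by
    by_contra! hneg
    have := hLO (0, u / (2 * c)) (by
      simp only [O, mem_ofPred_eq, hp0, neg_zero]
      exact div_neg_of_neg_of_pos hneg (by positivity))
    rw [hL, hL0, div_mul_eq_mul_div, mul_div_mul_right _ _ hc.ne'] at this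
    linarith
  refine ⟨-c⁻¹ • L.comp (ContinuousLinearMap.inl ℝ E ℝ), fun x hx => ?_, fun e => ?_⟩
  · have := hLK x hx
    rw [← Prod.mk.eta (p := x), hL] at this
    simp only [FunLike.coe_smul, Pi.smul_apply, ContinuousLinearMap.comp_apply,
      ContinuousLinearMap.inl_apply, smul_eq_mul, neg_mul, ← div_eq_inv_mul, neg_le]
    rw [le_div_iff₀ hc]
    linarith
  · refine le_of_forall_lt fun s hs => ?_
    have := hLO (e, s) hs
    rw [hL] at this
    simp only [FunLike.coe_smul, Pi.smul_apply, ContinuousLinearMap.comp_apply,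
      ContinuousLinearMap.inl_apply, smul_eq_mul, neg_mul, ← div_eq_inv_mul, lt_neg]
    rw [div_lt_iff₀ hc]
    linarith

section

variable {A : Set (X × StrongDual ℝ X)}

def fitzTerm (α z : X × StrongDual ℝ X) : ℝ := α.2 z.1 + z.2 α.1 - α.2 α.1

def IsMonoRelated (A : Set (X × StrongDual ℝ X)) (ε : ℝ) (z : X × StrongDual ℝ X) : Prop :=
  ∀ α ∈ A, -ε ≤ (z.2 - α.2) (z.1 - α.1)

theorem fitzTerm_eq (α z : X × StrongDual ℝ X) :
    fitzTerm α z = z.2 z.1 - (z.2 - α.2) (z.1 - α.1) := by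
  simp only [fitzTerm, map_sub, sub_apply]
  ring

theorem fitzTerm_smul_add_smul (α z w : X × StrongDual ℝ X) {a b : ℝ} (hab : a + b = 1) :
    fitzTerm α (a • z + b • w) = a * fitzTerm α z + b * fitzTerm α w := by
  simp only [fitzTerm, Prod.fst_add, Prod.snd_add, Prod.smul_fst, Prod.smul_snd, map_add,
    map_smul, add_apply, smul_apply, smul_eq_mul]
  linear_combination α.2 α.1 * hab

theorem isMonoRelated_iff {ε : ℝ} {z : X × StrongDual ℝ X} :
    IsMonoRelated A ε z ↔ ∀ α ∈ A, fitzTerm α z ≤ z.2 z.1 + ε := by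
  simp only [IsMonoRelated, fitzTerm_eq]
  exact forall₂_congr fun _ _ => by constructor <;> intro <;> linarith

theorem IsMonoRelated.mono {ε ε' : ℝ} {z : X × StrongDual ℝ X} (h : IsMonoRelated A ε z)
    (hε : ε ≤ ε') : IsMonoRelated A ε' z :=
  fun α hα => (neg_le_neg hε).trans (h α hα)

theorem IsMonotoneOp.isMonoRelated (hA : IsMonotoneOp A) {z : X × StrongDual ℝ X} (hz : z ∈ A) :
    IsMonoRelated A 0 z :=
  fun α hα => by simpa using hA z hz α hα

theorem isMonoRelated_zero_of_tendsto {u : ℕ → X × StrongDual ℝ X} {z : X × StrongDual ℝ X}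
    {ε : ℕ → ℝ} (hu : Tendsto u atTop (𝓝 z)) (hε : Tendsto ε atTop (𝓝 0))
    (h : ∀ n, IsMonoRelated A (ε n) (u n)) :
    IsMonoRelated A 0 z := fun α hα => by
  have hcont : Continuous fun w : X × StrongDual ℝ X => (w.2 - α.2) (w.1 - α.1) :=
    (continuous_snd.sub continuous_const).clm_apply (continuous_fst.sub continuous_const)
  simpa using le_of_tendsto_of_tendsto' hε.neg ((hcont.tendsto z).comp hu) fun n => h n α hα

theorem iSup_coe_lt_top_iff {ι : Sort*} (f : ι → ℝ) :
    (⨆ i, (f i : EReal)) < ⊤ ↔ ∃ r : ℝ, ∀ i, f i ≤ r :=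
  ⟨fun h => ⟨(⨆ i, (f i : EReal)).toReal, fun i =>
      EReal.coe_le_coe_iff.1 ((le_iSup _ i).trans (EReal.le_coe_toReal h.ne))⟩,
    fun ⟨r, hr⟩ =>
      (iSup_le fun i => EReal.coe_le_coe_iff.2 (hr i)).trans_lt (EReal.coe_lt_top r)⟩

theorem fitz_lt_top_iff {z : X × StrongDual ℝ X} :
    fitz A z < ⊤ ↔ ∃ r : ℝ, ∀ α ∈ A, fitzTerm α z ≤ r := by
  simp only [fitz, iSup_coe_lt_top_iff, Subtype.forall, fitzTerm]

theorem phiFitz_lt_top_iff {q : StrongDual ℝ (StrongDual ℝ X) × StrongDual ℝ X} :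
    phiFitz A q < ⊤ ↔ ∃ r : ℝ, ∀ α ∈ A, q.1 α.2 + q.2 α.1 - α.2 α.1 ≤ r := by
  simp only [phiFitz, iSup_coe_lt_top_iff, Subtype.forall]

theorem phiFitz_inclusionInDoubleDual (x : X) (y : StrongDual ℝ X) :
    phiFitz A (inclusionInDoubleDual ℝ X x, y) = fitz A (x, y) := by
  simp only [phiFitz, fitz, dual_def]

theorem IsMonotoneOp.fitz_lt_top (hA : IsMonotoneOp A) {z : X × StrongDual ℝ X} (hz : z ∈ A) :
    fitz A z < ⊤ :=
  fitz_lt_top_iff.2 ⟨z.2 z.1, fun α hα => by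
    simpa using isMonoRelated_iff.1 (hA.isMonoRelated hz) α hα⟩

theorem convex_setOf_fitz_lt_top (A : Set (X × StrongDual ℝ X)) :
    Convex ℝ {z | fitz A z < ⊤} := by
  intro z hz w hw a b ha hb hab
  obtain ⟨r, hr⟩ := fitz_lt_top_iff.1 hz
  obtain ⟨s, hs⟩ := fitz_lt_top_iff.1 hw
  refine fitz_lt_top_iff.2 ⟨a * r + b * s, fun α hα => ?_⟩
  rw [fitzTerm_smul_add_smul α z w hab]
  gcongr
  exacts [hr α hα, hs α hα]

/-- Ultramaximally monotone operators are of type (NI): `Φ_A(ψ, y) ≥ ψ y`. -/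
theorem IsUltraMaxMonotone.apply_le (hA : IsUltraMaxMonotone A)
    {ψ : StrongDual ℝ (StrongDual ℝ X)} {y : StrongDual ℝ X} {r : ℝ}
    (h : ∀ α ∈ A, ψ α.2 + y α.1 - α.2 α.1 ≤ r) : ψ y ≤ r := by
  by_contra! hlt
  obtain ⟨x, rfl, hx⟩ := hA.2 ψ y fun α hα => by
    have := h α hα
    simp only [sub_apply, map_sub, dual_def]
    linarith
  have := h (x, y) hx
  simp only [dual_def] at this hlt
  linarith

theorem IsUltraMaxMonotone.mem_of_isMonoRelated_zero (hA : IsUltraMaxMonotone A)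
    {z : X × StrongDual ℝ X} (hz : IsMonoRelated A 0 z) : z ∈ A := by
  obtain ⟨x, hxz, hx⟩ := hA.2 (inclusionInDoubleDual ℝ X z.1) z.2 fun α hα => by
    have := hz α hα
    simp only [sub_apply, map_sub, dual_def] at this ⊢
    linarith
  rw [← (inclusionInDoubleDualLi ℝ (E := X)).injective hxz] at hx
  simpa using hx

theorem exists_isMonoRelated_forall_le_add_norm [CompleteSpace X]
    (Λ : (X × StrongDual ℝ X) ≃L[ℝ] X × StrongDual ℝ X) {ε : ℝ} (hε : 0 < ε)
    {z₀ : X × StrongDual ℝ X} (h₀ : IsMonoRelated A ε z₀) :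
    ∃ z γ, 0 ≤ γ ∧ ‖Λ (z - z₀)‖ ≤ 1 ∧ IsMonoRelated A γ z ∧
      ∀ w c, 0 ≤ c → IsMonoRelated A c w → γ ≤ c + ε * ‖Λ (w - z)‖ := by
  -- the gap `F_A z - z.2 z.1`, clamped to `[0, ε + 1]` so that Ekeland's principle applies
  set φ : A → X × StrongDual ℝ X → ℝ := fun α z =>
    max 0 (min (-(z.2 - α.1.2) (z.1 - α.1.1)) (ε + 1))
  set f : X × StrongDual ℝ X → ℝ := fun z => ⨆ α, φ α z
  have hbdd (z : X × StrongDual ℝ X) : BddAbove (range fun α => φ α z) :=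
    ⟨ε + 1, by rintro _ ⟨α, rfl⟩; exact max_le (by linarith) (min_le_right _ _)⟩
  have hf0 (z : X × StrongDual ℝ X) : 0 ≤ f z := Real.iSup_nonneg fun _ => le_max_left _ _
  have hf_le (w c) (hc : 0 ≤ c) (hw : IsMonoRelated A c w) : f w ≤ c :=
    Real.iSup_le (fun α => max_le hc ((min_le_left _ _).trans (by linarith [hw α α.2]))) hc
  have hlsc : LowerSemicontinuous f := lowerSemicontinuous_ciSup hbdd fun α =>
    (continuous_const.max (((continuous_snd.sub continuous_const).clm_apply
      (continuous_fst.sub continuous_const)).neg.min continuous_const)).lowerSemicontinuous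
  obtain ⟨z, hz₀, hz⟩ := hlsc.exists_forall_le_add_mul_norm_apply
    ⟨0, by rintro _ ⟨w, rfl⟩; exact hf0 w⟩ Λ hε z₀
  have hfz₀ := hf_le z₀ ε hε.le h₀
  refine ⟨z, f z, hf0 z, ?_, fun α hα => ?_, fun w c hc hw => (hz w).trans ?_⟩
  · nlinarith [hf0 z]
  · have := le_ciSup (hbdd z) ⟨α, hα⟩
    by_contra! hlt
    have := lt_min (show f z < -(z.2 - α.2) (z.1 - α.1) by linarith)
      (show f z < ε + 1 by nlinarith [norm_nonneg (Λ (z - z₀))])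
    linarith [le_max_right 0 (min (-(z.2 - α.2) (z.1 - α.1)) (ε + 1))]
  · linarith [hf_le w c hc hw]

theorem le_of_forall_isMonoRelated_le_add_norm {F : Type*} [NormedAddCommGroup F]
    [NormedSpace ℝ F] {Λ : X × StrongDual ℝ X →L[ℝ] F} {z : X × StrongDual ℝ X} {γ ε : ℝ}
    (hγ : 0 < γ) (hz : IsMonoRelated A γ z)
    (hek : ∀ w c, 0 ≤ c → IsMonoRelated A c w → γ ≤ c + ε * ‖Λ (w - z)‖)
    {e : X × StrongDual ℝ X} {H : ℝ} (hH : ∀ α ∈ A, fitzTerm α (z + e) ≤ H) :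
    z.2 z.1 + γ + (z.2 e.1 + e.2 z.1) - ε * ‖Λ e‖ ≤ H := by
  by_contra! hlt
  set η := z.2 z.1 + γ + (z.2 e.1 + e.2 z.1) - ε * ‖Λ e‖ - H
  have hη : 0 < η := by linarith
  have hsmall : ∀ᶠ t in 𝓝[>] (0 : ℝ),
      0 < t ∧ t < 1 ∧ t * (ε * ‖Λ e‖) < γ ∧ 0 < η + t * e.2 e.1 := by
    refine eventually_mem_nhdsWithin.and (Filter.Eventually.filter_mono nhdsWithin_le_nhds ?_)
    exact (eventually_lt_nhds one_pos).and ((ContinuousAt.eventually_lt (by fun_prop)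
      continuousAt_const (by simpa using hγ)).and
      (ContinuousAt.eventually_lt continuousAt_const (by fun_prop) (by simpa using hη)))
  obtain ⟨t, ht0, ht1, htγ, htη⟩ := hsmall.exists
  -- along `z + t • e` the terms of `F_A` are affine and the pairing is quadratic in `t`
  have hw :
      IsMonoRelated A (max 0 (γ - t * (η + ε * ‖Λ e‖) - t ^ 2 * e.2 e.1)) (z + t • e) := by
    refine isMonoRelated_iff.2 fun α hα => ?_
    have h1 : fitzTerm α (z + t • e) = (1 - t) * fitzTerm α z + t * fitzTerm α (z + e) := by
      rw [← fitzTerm_smul_add_smul _ _ _ (by ring)]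
      congr 1
      module
    have h2 : (z + t • e).2 (z + t • e).1
        = z.2 z.1 + t * (z.2 e.1 + e.2 z.1) + t ^ 2 * e.2 e.1 := by
      simp only [Prod.fst_add, Prod.snd_add, Prod.smul_fst, Prod.smul_snd, map_add, map_smul,
        add_apply, smul_apply, smul_eq_mul]
      ring
    have h3 := isMonoRelated_iff.1 hz α hα
    rw [h1, h2]
    nlinarith [mul_le_mul_of_nonneg_left h3 (sub_nonneg.2 ht1.le),
      mul_le_mul_of_nonneg_left (hH α hα) ht0.le,
      le_max_right 0 (γ - t * (η + ε * ‖Λ e‖) - t ^ 2 * e.2 e.1)]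
  have := hek _ _ (le_max_left _ _) hw
  rw [add_sub_cancel_left, map_smul, norm_smul, Real.norm_of_nonneg ht0.le] at this
  rcases max_cases 0 (γ - t * (η + ε * ‖Λ e‖) - t ^ 2 * e.2 e.1) with ⟨h, -⟩ | ⟨h, -⟩ <;>
    rw [h] at this <;> nlinarith [mul_pos ht0 htη]

theorem IsMonotoneOp.exists_dual_of_forall_isMonoRelated_le_add_norm {F : Type*}
    [NormedAddCommGroup F] [NormedSpace ℝ F] (hA : IsMonotoneOp A)
    (Λ : X × StrongDual ℝ X →L[ℝ] F) {z : X × StrongDual ℝ X} {γ ε : ℝ} (hε : 0 ≤ ε)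
    (hγ : 0 < γ) (hz : IsMonoRelated A γ z)
    (hek : ∀ w c, 0 ≤ c → IsMonoRelated A c w → γ ≤ c + ε * ‖Λ (w - z)‖) :
    ∃ g : StrongDual ℝ (X × StrongDual ℝ X),
      (∀ α ∈ A, γ + g (α - z) ≤ (α.2 - z.2) (α.1 - z.1)) ∧ ∀ e, |g e| ≤ ε * ‖Λ e‖ := by
  -- the epigraph of `e ↦ F_A (z + e) - (z.2 z.1 + γ) - (z.2 e.1 + e.2 z.1)`
  set K : Set ((X × StrongDual ℝ X) × ℝ) :=
    {x | ∀ α ∈ A, fitzTerm α (z + x.1) ≤ z.2 z.1 + γ + (z.2 x.1.1 + x.1.2 z.1) + x.2}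
  have hK : Convex ℝ K := by
    intro x hx y hy a b ha hb hab α hα
    have h1 : z + (a • x + b • y).1 = a • (z + x.1) + b • (z + y.1) := by
      simp only [Prod.fst_add, Prod.smul_fst, smul_add]
      rw [add_add_add_comm, ← add_smul, hab, one_smul]
    have hx' := hx α hα
    have hy' := hy α hα
    rw [h1, fitzTerm_smul_add_smul _ _ _ hab]
    simp only [Prod.fst_add, Prod.snd_add, Prod.smul_fst, Prod.smul_snd, map_add, map_smul,
      add_apply, smul_apply, smul_eq_mul] at hx' hy' ⊢
    linear_combination a * hx' + b * hy' + (z.2 z.1 + γ) * hab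
  have h0 : ((0 : X × StrongDual ℝ X), (0 : ℝ)) ∈ K := fun α hα => by
    simpa using isMonoRelated_iff.1 hz α hα
  have hp : ConvexOn ℝ univ fun e => ε * ‖Λ e‖ :=
    ((convexOn_norm convex_univ).comp_linearMap (Λ : X × StrongDual ℝ X →ₗ[ℝ] F)).smul hε
  obtain ⟨g, hgK, hgp⟩ := exists_dual_le_of_forall_neg_le hK h0 hp (by fun_prop) (by simp)
    fun x hx => by linarith [le_of_forall_isMonoRelated_le_add_norm hγ hz hek hx]
  refine ⟨g, fun α hα => ?_, fun e => abs_le.2 ⟨hgp e, ?_⟩⟩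
  · have := hgK (α - z, (α.2 - z.2) (α.1 - z.1) - γ) fun β hβ => by
      have := isMonoRelated_iff.1 (hA.isMonoRelated hα) β hβ
      simp only [add_sub_cancel, Prod.fst_sub, Prod.snd_sub, map_sub, sub_apply] at this ⊢
      linarith
    linarith
  · have := hgp (-e)
    rw [map_neg, map_neg, norm_neg] at this
    linarith

theorem IsUltraMaxMonotone.le_neg_apply_of_forall_add_le (hA : IsUltraMaxMonotone A)
    {z : X × StrongDual ℝ X} {γ : ℝ} {g : StrongDual ℝ (X × StrongDual ℝ X)}
    (h : ∀ α ∈ A, γ + g (α - z) ≤ (α.2 - z.2) (α.1 - z.1)) :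
    γ ≤ -g (0, g.comp (ContinuousLinearMap.inl ℝ X (StrongDual ℝ X))) := by
  set v₁ := g.comp (ContinuousLinearMap.inl ℝ X (StrongDual ℝ X))
  set v₂ := g.comp (ContinuousLinearMap.inr ℝ X (StrongDual ℝ X))
  have hg (w : X × StrongDual ℝ X) : g w = v₁ w.1 + v₂ w.2 := (g.comp_inl_add_comp_inr w).symm
  have := hA.apply_le (ψ := inclusionInDoubleDual ℝ X z.1 + v₂) (y := z.2 + v₁)
    (r := z.2 z.1 - γ + g z) fun α hα => by
      have := h α hα
      rw [hg] at this
      rw [hg z]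
      simp only [add_apply, dual_def, map_sub, sub_apply, Prod.fst_sub, Prod.snd_sub] at this ⊢
      linarith
  rw [hg z] at this
  simp only [add_apply, dual_def, map_add] at this
  change γ ≤ -v₂ v₁
  linarith

theorem IsUltraMaxMonotone.exists_isMonoRelated_sq_div [CompleteSpace X]
    (hA : IsUltraMaxMonotone A) {ε P Q : ℝ} (hε : 0 < ε) (hP : 0 < P) (hQ : 0 < Q)
    {z₀ : X × StrongDual ℝ X} (h₀ : IsMonoRelated A ε z₀) :
    ∃ z : X × StrongDual ℝ X, ‖z.1 - z₀.1‖ ≤ P ∧ ‖z.2 - z₀.2‖ ≤ Q ∧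
      IsMonoRelated A (ε ^ 2 / (P * Q)) z := by
  set Λ : (X × StrongDual ℝ X) ≃L[ℝ] X × StrongDual ℝ X :=
    (ContinuousLinearEquiv.smulLeft (Units.mk0 P⁻¹ (by positivity))).prodCongr
      (ContinuousLinearEquiv.smulLeft (Units.mk0 Q⁻¹ (by positivity)))
  have hΛ (e : X × StrongDual ℝ X) : ‖Λ e‖ = max (P⁻¹ * ‖e.1‖) (Q⁻¹ * ‖e.2‖) := by
    simp [Λ, Prod.norm_def, norm_smul, abs_of_pos hP, abs_of_pos hQ]
  obtain ⟨z, γ, hγ0, hnear, hz, hek⟩ := exists_isMonoRelated_forall_le_add_norm Λ hε h₀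
  rw [hΛ] at hnear
  refine ⟨z, ?_, ?_, ?_⟩
  · have := (le_max_left _ _).trans hnear
    rwa [inv_mul_le_iff₀ hP, mul_one] at this
  · have := (le_max_right _ _).trans hnear
    rwa [inv_mul_le_iff₀ hQ, mul_one] at this
  rcases hγ0.eq_or_lt with rfl | hγ
  · exact hz.mono (by positivity)
  obtain ⟨g, hgA, hg⟩ :=
    hA.1.exists_dual_of_forall_isMonoRelated_le_add_norm
      (Λ : X × StrongDual ℝ X →L[ℝ] X × StrongDual ℝ X) hε.le hγ hz hek
  set v₁ := g.comp (ContinuousLinearMap.inl ℝ X (StrongDual ℝ X))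
  have hv₁ : ‖v₁‖ ≤ ε * P⁻¹ := v₁.opNorm_le_bound (by positivity) fun u => by
    have := hg (u, 0)
    rw [ContinuousLinearEquiv.coe_coe, hΛ, norm_zero, mul_zero, max_eq_left (by positivity)]
      at this
    simpa [v₁, mul_assoc] using this
  refine hz.mono ((hA.le_neg_apply_of_forall_add_le hgA).trans ?_)
  calc -g (0, v₁) ≤ |g (0, v₁)| := neg_le_abs _
    _ ≤ ε * (Q⁻¹ * ‖v₁‖) := by
      simpa [hΛ, norm_zero, max_eq_right (by positivity : 0 ≤ Q⁻¹ * ‖v₁‖)] using hg (0, v₁)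
    _ ≤ ε * (Q⁻¹ * (ε * P⁻¹)) := by gcongr
    _ = ε ^ 2 / (P * Q) := by field_simp

theorem IsUltraMaxMonotone.exists_mem_ranOp_norm_sub_le [CompleteSpace X]
    (hA : IsUltraMaxMonotone A) {ε : ℝ} {z₀ : X × StrongDual ℝ X} (h₀ : IsMonoRelated A ε z₀)
    {δ : ℝ} (hδ : 0 < δ) : ∃ b ∈ ranOp A, ‖z₀.2 - b‖ ≤ δ := by
  set G := max ε 1
  have hG : 0 < G := one_pos.trans_le (le_max_right _ _)
  set r : ℕ → ℝ := fun n => (1 / 2) ^ n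
  -- step `n` has gap `G r²` and moves by `8G/δ · r` in `X` and by `δ/2 · r` in `X*`, `r = 2⁻ⁿ`
  obtain ⟨u, rfl, hu⟩ := exists_seq_of_forall_exists
    (p := fun n z => IsMonoRelated A (G * r n ^ 2) z)
    (R := fun n z z' => ‖z'.1 - z.1‖ ≤ 8 * G / δ * r n ∧ ‖z'.2 - z.2‖ ≤ δ / 2 * r n)
    (h₀.mono (by simp [r, G])) fun n z hz => by
      obtain ⟨z', h1, h2, h3⟩ :=
        hA.exists_isMonoRelated_sq_div (P := 8 * G / δ * r n) (Q := δ / 2 * r n)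
          (by positivity) (by positivity) (by positivity) hz
      refine ⟨z', h3.mono (le_of_eq ?_), h1, h2⟩
      simp only [r, pow_succ]
      field_simp
      ring
  choose hrel hP hQ using hu
  have hsum : Summable r := summable_geometric_two
  have hdist (n : ℕ) : dist (u n) (u (n + 1)) ≤ 8 * G / δ * r n + δ / 2 * r n := by
    have : 0 ≤ 8 * G / δ * r n := by positivity
    have : 0 ≤ δ / 2 * r n := by positivity
    rw [dist_comm, Prod.dist_eq, dist_eq_norm, dist_eq_norm]
    exact max_le (by linarith [hP n]) (by linarith [hQ n])
  obtain ⟨z, hz⟩ := cauchySeq_tendsto_of_complete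
    (cauchySeq_of_dist_le_of_summable _ hdist ((hsum.mul_left _).add (hsum.mul_left _)))
  have hgap : Tendsto (fun n => G * r n ^ 2) atTop (𝓝 0) := by
    simpa using
      ((tendsto_pow_atTop_nhds_zero_of_lt_one (by norm_num) (by norm_num)).pow 2).const_mul G
  have hzA : z ∈ A := hA.mem_of_isMonoRelated_zero (isMonoRelated_zero_of_tendsto hz hgap hrel)
  refine ⟨z.2, ⟨z.1, hzA⟩, ?_⟩
  have := dist_le_tsum_of_dist_le_of_tendsto₀ (f := fun n => (u n).2) (fun n => δ / 2 * r n)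
    (fun n => by rw [dist_comm, dist_eq_norm]; exact hQ n) (hsum.mul_left _)
    ((continuous_snd.tendsto z).comp hz)
  rw [tsum_mul_left, tsum_geometric_two, dist_eq_norm] at this
  linarith

theorem IsUltraMaxMonotone.mem_closure_ranOp_of_fitz_lt_top [CompleteSpace X]
    (hA : IsUltraMaxMonotone A) {z : X × StrongDual ℝ X} (hz : fitz A z < ⊤) :
    z.2 ∈ closure (ranOp A) := by
  obtain ⟨r, hr⟩ := fitz_lt_top_iff.1 hz
  have h : IsMonoRelated A (r - z.2 z.1) z :=
    isMonoRelated_iff.2 fun α hα => by linarith [hr α hα]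
  refine Metric.mem_closure_iff.2 fun δ hδ => ?_
  obtain ⟨b, hb, hzb⟩ := hA.exists_mem_ranOp_norm_sub_le h (half_pos hδ)
  exact ⟨b, hb, by rw [dist_eq_norm]; linarith⟩

theorem IsUltraMaxMonotone.mem_closure_convexHull_of_phiFitz_lt_top
    (hA : IsUltraMaxMonotone A) {q : StrongDual ℝ (StrongDual ℝ X) × StrongDual ℝ X}
    (hq : phiFitz A q < ⊤) :
    q.2 ∈ closure (convexHull ℝ (ranOp A)) := by
  by_contra hout
  obtain ⟨ℓ, u, hℓ, hℓq⟩ :=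
    geometric_hahn_banach_closed_point (convex_convexHull ℝ _).closure isClosed_closure hout
  obtain ⟨r, hr⟩ := phiFitz_lt_top_iff.1 hq
  have key (t : ℝ) (ht : 0 ≤ t) : q.1 q.2 + t * ℓ q.2 ≤ r + t * u := by
    have := hA.apply_le (ψ := q.1 + t • ℓ) (y := q.2) (r := r + t * u) fun α hα => by
      have h1 := hr α hα
      have h2 : ℓ α.2 < u := hℓ _ (subset_closure (subset_convexHull ℝ _ ⟨α.1, hα⟩))
      simp only [add_apply, smul_apply, smul_eq_mul]
      nlinarith
    simpa using this
  have hd : 0 < ℓ q.2 - u := sub_pos.2 hℓq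
  have h0 := key 0 le_rfl
  set t := (r - q.1 q.2 + 1) / (ℓ q.2 - u)
  have ht : t * (ℓ q.2 - u) = r - q.1 q.2 + 1 := div_mul_cancel₀ _ hd.ne'
  have := key t (div_nonneg (by linarith) hd.le)
  nlinarith

end

theorem stmt2 [CompleteSpace X] (A : Set (X × StrongDual ℝ X)) (hA : IsUltraMaxMonotone A) :
    closure (ranOp A) = closure (convexHull ℝ (ranOp A)) ∧
    closure (ranOp A) = closure (Prod.snd '' {q : X × StrongDual ℝ X | fitz A q < ⊤}) ∧
    closure (ranOp A) =
      closure (Prod.snd '' {q : StrongDual ℝ (StrongDual ℝ X) × StrongDual ℝ X | phiFitz A q < ⊤}) := by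
  set D := Prod.snd '' {q : X × StrongDual ℝ X | fitz A q < ⊤}
  set D' := Prod.snd '' {q : StrongDual ℝ (StrongDual ℝ X) × StrongDual ℝ X | phiFitz A q < ⊤}
  have hran : ranOp A ⊆ D := fun _ ⟨_, hx⟩ => ⟨_, hA.1.fitz_lt_top hx, rfl⟩
  have hconv : convexHull ℝ (ranOp A) ⊆ D :=
    convexHull_min hran ((convex_setOf_fitz_lt_top A).linear_image (LinearMap.snd ℝ _ _))
  have hDD' : D ⊆ D' := image_subset_iff.2 fun q hq =>
    ⟨(inclusionInDoubleDual ℝ X q.1, q.2),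
      by rwa [mem_ofPred_eq, phiFitz_inclusionInDoubleDual], rfl⟩
  have hD : D ⊆ closure (ranOp A) :=
    image_subset_iff.2 fun _ hq => hA.mem_closure_ranOp_of_fitz_lt_top hq
  have hD' : D' ⊆ closure (convexHull ℝ (ranOp A)) :=
    image_subset_iff.2 fun _ hq => hA.mem_closure_convexHull_of_phiFitz_lt_top hq
  have h1 : closure (ranOp A) ⊆ closure (convexHull ℝ (ranOp A)) :=
    closure_mono (subset_convexHull ℝ _)
  have h2 : closure (convexHull ℝ (ranOp A)) ⊆ closure D := closure_mono hconv
  have h3 : closure D ⊆ closure (ranOp A) := closure_minimal hD isClosed_closure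
  have h4 : closure D' ⊆ closure (convexHull ℝ (ranOp A)) := closure_minimal hD' isClosed_closure
  have e1 := h1.antisymm (h2.trans h3)
  exact ⟨e1, (h1.trans h2).antisymm h3,
    (h1.trans (h2.trans (closure_mono hDD'))).antisymm (h4.trans e1.symm.subset)⟩
end

section
/- Let X be a real Banach space, let A, B : X ⇉ X* be maximally monotone, and assume that ⋃_{λ>0} λ(dom A − dom B) is a closed linear subspace of X. Set E := {x ∈ X : there exists x* ∈ X* with F_A*(x*, x̂) < +∞} and F := {x ∈ X : there exists x* ∈ X* with F_B*(x*, x̂) < +∞}, where F_A* denotes the Fenchel conjugate of the Fitzpatrick function F_A. Then ⋃_{λ>0} λ(dom A − dom B) = ⋃_{λ>0} λ(E − F). -/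
open Pointwise Set NormedSpace

variable {X : Type*} [NormedAddCommGroup X] [NormedSpace ℝ X]

/-!
Every point of `dom A` lies in `E`, since `F_A*(a*, â) ≤ ⟨a, a*⟩` on `gra A`. Conversely, `E` lies
in every closed convex set containing `dom A`, in particular in the closed affine subspace
`b₀ + V` for any `b₀ ∈ dom B`; likewise `F ⊆ a₀ + V`, so `E − F ⊆ V` and its cone is `V` as well.
-/

-- The set `E` of the theorem (`F` for `B`).
def fitzConjDom (A : Set (X × StrongDual ℝ X)) : Set X :=
  {x | ∃ xs : StrongDual ℝ X, fitzConj A (xs, inclusionInDoubleDual ℝ X x) < ⊤}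

section Fitzpatrick

variable {A : Set (X × StrongDual ℝ X)}

theorem IsMaxMonotone.nonempty (hA : IsMaxMonotone A) : A.Nonempty := by
  by_contra h
  rw [not_nonempty_iff_eq_empty] at h
  simpa [h] using hA.2 0 0 (by simp [h])

theorem le_fitz_of_mem {a : X} {as : StrongDual ℝ X} (ha : (a, as) ∈ A)
    (q : X × StrongDual ℝ X) : ((as q.1 + q.2 a - as a : ℝ) : EReal) ≤ fitz A q :=
  le_iSup (fun p : A => ((p.1.2 q.1 + q.2 p.1.1 - p.1.2 p.1.1 : ℝ) : EReal)) ⟨(a, as), ha⟩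

theorem le_fitzConj_of_fitz_le {q : X × StrongDual ℝ X} {r : ℝ} (hq : fitz A q ≤ r)
    (xs : StrongDual ℝ X) (x : X) :
    ((xs q.1 + q.2 x - r : ℝ) : EReal) ≤ fitzConj A (xs, inclusionInDoubleDual ℝ X x) :=
  calc ((xs q.1 + q.2 x - r : ℝ) : EReal) = ((xs q.1 + q.2 x : ℝ) : EReal) - r := by
        rw [EReal.coe_sub]
    _ ≤ ((xs q.1 + q.2 x : ℝ) : EReal) - fitz A q := EReal.sub_le_sub le_rfl hq
    _ ≤ fitzConj A (xs, inclusionInDoubleDual ℝ X x) :=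
        le_iSup (fun q : X × StrongDual ℝ X =>
          ((xs q.1 + inclusionInDoubleDual ℝ X x q.2 : ℝ) : EReal) - fitz A q) q

theorem fitzConj_le_of_mem {x : X} {xs : StrongDual ℝ X} (hx : (x, xs) ∈ A) :
    fitzConj A (xs, inclusionInDoubleDual ℝ X x) ≤ ((xs x : ℝ) : EReal) := by
  refine iSup_le fun q => ?_
  calc ((xs q.1 + inclusionInDoubleDual ℝ X x q.2 : ℝ) : EReal) - fitz A q
      ≤ ((xs q.1 + q.2 x : ℝ) : EReal) - ((xs q.1 + q.2 x - xs x : ℝ) : EReal) :=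
        EReal.sub_le_sub le_rfl (le_fitz_of_mem hx q)
    _ = ((xs x : ℝ) : EReal) := by rw [← EReal.coe_sub]; congr 1; ring

theorem domOp_subset_fitzConjDom (A : Set (X × StrongDual ℝ X)) : domOp A ⊆ fitzConjDom A :=
  fun _ ⟨xs, hx⟩ => ⟨xs, (fitzConj_le_of_mem hx).trans_lt (EReal.coe_lt_top _)⟩

-- Each term of the supremum is bounded using monotonicity against `(a₀, a₀*)`.
theorem fitz_add_smul_le (hA : IsMonotoneOp A) {a₀ : X} {as₀ : StrongDual ℝ X}
    (ha₀ : (a₀, as₀) ∈ A) {f : StrongDual ℝ X} {u : ℝ} (hfu : ∀ a ∈ domOp A, f a ≤ u)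
    {t : ℝ} (ht : 0 ≤ t) : fitz A (a₀, as₀ + t • f) ≤ ((as₀ a₀ + t * u : ℝ) : EReal) := by
  refine iSup_le fun ⟨p, hp⟩ => EReal.coe_le_coe_iff.2 ?_
  have hmono := hA (a₀, as₀) ha₀ p hp
  have hfp := mul_le_mul_of_nonneg_left (hfu p.1 ⟨p.2, hp⟩) ht
  simp only [sub_apply, map_sub] at hmono
  simp only [add_apply, FunLike.coe_smul, Pi.smul_apply, smul_eq_mul]
  linarith

-- A functional `f` separating `x` from `C` makes `F_A*(x*, x̂)` grow linearly along
-- `(a₀, a₀* + t • f)`.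
theorem fitzConjDom_subset_of_convex_of_isClosed (hA : IsMonotoneOp A) (hne : A.Nonempty)
    {C : Set X} (hCconv : Convex ℝ C) (hCclosed : IsClosed C) (hdom : domOp A ⊆ C) :
    fitzConjDom A ⊆ C := by
  rintro x ⟨xs, hx⟩
  by_contra hxC
  obtain ⟨⟨a₀, as₀⟩, ha₀⟩ := hne
  obtain ⟨f, u, hfu, hux⟩ := geometric_hahn_banach_closed_point hCconv hCclosed hxC
  obtain ⟨M, hM, -⟩ := EReal.exists_between_coe_real hx
  set c := xs a₀ + as₀ x - as₀ a₀
  set t := (|M - c| + 1) / (f x - u)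
  have hε : 0 < f x - u := sub_pos.2 hux
  have ht : t * (f x - u) = |M - c| + 1 := div_mul_cancel₀ _ hε.ne'
  have hbound := le_fitzConj_of_fitz_le
    (fitz_add_smul_le hA ha₀ (fun a ha => (hfu a (hdom ha)).le)
      (div_nonneg (by positivity) hε.le : 0 ≤ t)) xs x
  have hlt : ((xs a₀ + (as₀ + t • f) x - (as₀ a₀ + t * u) : ℝ) : EReal) < M :=
    hbound.trans_lt hM
  rw [EReal.coe_lt_coe_iff] at hlt
  simp only [add_apply, FunLike.coe_smul, Pi.smul_apply, smul_eq_mul] at hlt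
  linarith [le_abs_self (M - c)]

theorem sub_mem_of_mem_fitzConjDom (hA : IsMonotoneOp A) (hne : A.Nonempty) {V : Submodule ℝ X}
    (hV : IsClosed (V : Set X)) {v : X} (hdom : ∀ a ∈ domOp A, a - v ∈ V) {x : X}
    (hx : x ∈ fitzConjDom A) : x - v ∈ V := by
  simp only [sub_eq_add_neg] at hdom ⊢
  exact fitzConjDom_subset_of_convex_of_isClosed hA hne (V.convex.translate_preimage_left (-v))
    (hV.preimage (continuous_add_const _)) hdom hx

end Fitzpatrick

theorem stmt3_general (A B : Set (X × StrongDual ℝ X))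
    (hA : IsMaxMonotone A) (hB : IsMaxMonotone B)
    (V : Submodule ℝ X) (hVclosed : IsClosed (V : Set X))
    (hVeq : (V : Set X) = ⋃ lam ∈ Set.Ioi (0:ℝ), lam • (domOp A - domOp B)) :
    (⋃ lam ∈ Set.Ioi (0:ℝ), lam • (domOp A - domOp B)) =
      ⋃ lam ∈ Set.Ioi (0:ℝ), lam •
        ({x : X | ∃ xs : StrongDual ℝ X, fitzConj A (xs, inclusionInDoubleDual ℝ X x) < ⊤} -
          {x : X | ∃ xs : StrongDual ℝ X, fitzConj B (xs, inclusionInDoubleDual ℝ X x) < ⊤}) := by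
  obtain ⟨⟨a₀, as₀⟩, ha₀⟩ := hA.nonempty
  obtain ⟨⟨b₀, bs₀⟩, hb₀⟩ := hB.nonempty
  have hsub : domOp A - domOp B ⊆ V :=
    hVeq ▸ fun z hz => mem_biUnion (x := 1) (mem_Ioi.2 one_pos) ⟨z, hz, one_smul ℝ z⟩
  have hab : a₀ - b₀ ∈ V := hsub ⟨a₀, ⟨as₀, ha₀⟩, b₀, ⟨bs₀, hb₀⟩, rfl⟩
  have hEF : fitzConjDom A - fitzConjDom B ⊆ V := by
    rintro _ ⟨e, he, f, hf, rfl⟩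
    have heb : e - b₀ ∈ V := sub_mem_of_mem_fitzConjDom hA.1 ⟨_, ha₀⟩ hVclosed
      (fun a ha => hsub ⟨a, ha, b₀, ⟨bs₀, hb₀⟩, rfl⟩) he
    have hfa : f - a₀ ∈ V := sub_mem_of_mem_fitzConjDom hB.1 ⟨_, hb₀⟩ hVclosed
      (fun b hb => by simpa using V.neg_mem (hsub ⟨a₀, ⟨as₀, ha₀⟩, b, hb, rfl⟩)) hf
    have hdecomp : e - f = (e - b₀) - (f - a₀) - (a₀ - b₀) := by abel
    change e - f ∈ V
    rw [hdecomp]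
    exact V.sub_mem (V.sub_mem heb hfa) hab
  refine (iUnion₂_mono fun _ _ => smul_set_mono <|
    sub_subset_sub (domOp_subset_fitzConjDom A) (domOp_subset_fitzConjDom B)).antisymm ?_
  rw [← hVeq]
  exact iUnion₂_subset fun lam _ => smul_set_subset_iff.2 fun z hz => V.smul_mem lam (hEF hz)

theorem stmt3 [CompleteSpace X] (A B : Set (X × StrongDual ℝ X))
    (hA : IsMaxMonotone A) (hB : IsMaxMonotone B)
    (V : Submodule ℝ X) (hVclosed : IsClosed (V : Set X))
    (hVeq : (V : Set X) = ⋃ lam ∈ Set.Ioi (0:ℝ), lam • (domOp A - domOp B)) :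
    (⋃ lam ∈ Set.Ioi (0:ℝ), lam • (domOp A - domOp B)) =
      ⋃ lam ∈ Set.Ioi (0:ℝ), lam •
        ({x : X | ∃ xs : StrongDual ℝ X, fitzConj A (xs, inclusionInDoubleDual ℝ X x) < ⊤} -
          {x : X | ∃ xs : StrongDual ℝ X, fitzConj B (xs, inclusionInDoubleDual ℝ X x) < ⊤}) :=
  stmt3_general A B hA hB V hVclosed hVeq
end

section
/- Let X be a real Banach space, let A, B : X ⇉ X* be maximally monotone operators of type (FPV), and assume that ⋃_{λ>0} λ(dom A − dom B) is a closed linear subspace of X. Then ⋃_{λ>0} λ(dom A − dom B) = ⋃_{λ>0} λ(P_X(dom F_A) − P_X(dom F_B)), where P_X denotes the projection of X × X* onto the X coordinate. -/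
open Pointwise Set NormedSpace

variable {X : Type*} [NormedAddCommGroup X] [NormedSpace ℝ X]

/-
The inclusion `⊆` holds because `dom A ⊆ P_X(dom F_A)` for any monotone `A`: on the graph,
monotonicity gives `F_A(x, x*) ≤ ⟨x, x*⟩`. For `⊇`, maximal monotonicity alone yields
`P_X(dom F_A) ⊆ cl conv (dom A)`: if `x` lies outside, a functional `f` strictly separating `x`
from `cl conv (dom A)` makes `(x, x* + t f)` monotonically related to `gra A` for large `t`, which
puts `x` into `dom A`. Since the closed subspace `V` contains `dom A − dom B`, it also contains
`cl conv (dom A) − cl conv (dom B)`, and it is a cone.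
-/

section ClosedSubspace

variable {E : Type*} [AddCommGroup E] [Module ℝ E] [TopologicalSpace E] [ContinuousSub E]

theorem closure_convexHull_sub_subset {V : Submodule ℝ E} (hV : IsClosed (V : Set E))
    {S T : Set E} (hST : S - T ⊆ V) :
    closure (convexHull ℝ S) - closure (convexHull ℝ T) ⊆ V := by
  have hconv : convexHull ℝ S - convexHull ℝ T ⊆ V :=
    convexHull_sub (R := ℝ) S T ▸ convexHull_min hST V.convex
  rintro _ ⟨x, hx, y, hy, rfl⟩
  exact hV.closure_subset
    (map_mem_closure₂ continuous_sub hx hy fun a ha b hb => hconv (sub_mem_sub ha hb))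

end ClosedSubspace

section Fitzpatrick

variable {X : Type*} [NormedAddCommGroup X] [NormedSpace ℝ X] {A : Set (X × StrongDual ℝ X)}

theorem le_toReal_fitz {q p : X × StrongDual ℝ X} (hq : fitz A q < ⊤) (hp : p ∈ A) :
    p.2 q.1 + q.2 p.1 - p.2 p.1 ≤ (fitz A q).toReal := by
  have hle : ((p.2 q.1 + q.2 p.1 - p.2 p.1 : ℝ) : EReal) ≤ fitz A q :=
    le_iSup (fun p : A => ((p.1.2 q.1 + q.2 p.1.1 - p.1.2 p.1.1 : ℝ) : EReal)) ⟨p, hp⟩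
  exact EReal.coe_le_coe_iff.1 (hle.trans (EReal.le_coe_toReal hq.ne))

theorem IsMonotoneOp.fitz_le_apply (hA : IsMonotoneOp A) {x : X} {xs : StrongDual ℝ X}
    (hx : (x, xs) ∈ A) : fitz A (x, xs) ≤ ((xs x : ℝ) : EReal) := by
  refine iSup_le fun p => EReal.coe_le_coe_iff.2 ?_
  have hmono := hA (x, xs) hx p.1 p.2
  simp only [sub_apply, map_sub] at hmono
  linarith

theorem IsMonotoneOp.domOp_subset_fst_dom_fitz (hA : IsMonotoneOp A) :
    domOp A ⊆ Prod.fst '' {q : X × StrongDual ℝ X | fitz A q < ⊤} := by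
  rintro x ⟨xs, hx⟩
  exact ⟨(x, xs), (hA.fitz_le_apply hx).trans_lt (EReal.coe_lt_top _), rfl⟩

theorem IsMaxMonotone.fst_dom_fitz_subset_closure_convexHull (hA : IsMaxMonotone A) :
    Prod.fst '' {q : X × StrongDual ℝ X | fitz A q < ⊤} ⊆ closure (convexHull ℝ (domOp A)) := by
  rintro _ ⟨⟨x, xs⟩, hq, rfl⟩
  by_contra hx
  set M := (fitz A (x, xs)).toReal
  obtain ⟨f, u, hfu, hux⟩ :=
    geometric_hahn_banach_closed_point (convex_convexHull ℝ (domOp A)).closure isClosed_closure hx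
  have hmem_closure {a : X} (ha : a ∈ domOp A) : a ∈ closure (convexHull ℝ (domOp A)) :=
    subset_closure (subset_convexHull ℝ _ ha)
  have hgap : 0 < f x - u := by linarith
  set t := max 0 ((M - xs x + 1) / (f x - u))
  have ht : M - xs x + 1 ≤ t * (f x - u) :=
    (div_le_iff₀ hgap).1 (le_max_right _ _)
  -- `F_A(x, x*) ≤ M` bounds `⟨x − a, x* − a*⟩` below by `⟨x, x*⟩ − M`; the term `t f` does the rest.
  have hrelated : ∀ p ∈ A, 0 ≤ (xs + t • f - p.2) (x - p.1) := by
    intro p hp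
    have hM := le_toReal_fitz hq hp
    have hfp := hfu p.1 (hmem_closure ⟨p.2, hp⟩)
    have hshift : t * (f x - u) ≤ t * (f x - f p.1) :=
      mul_le_mul_of_nonneg_left (by linarith) (le_max_left _ _)
    simp only [sub_apply, add_apply,
      smul_apply, map_sub, smul_eq_mul] at hM ⊢
    linarith
  exact hx (hmem_closure ⟨_, hA.2 x _ hrelated⟩)

end Fitzpatrick

theorem stmt4 [CompleteSpace X] (A B : Set (X × StrongDual ℝ X))
    (hA : IsFPV A) (hB : IsFPV B)
    (V : Submodule ℝ X) (hVclosed : IsClosed (V : Set X))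
    (hVeq : (V : Set X) = ⋃ lam ∈ Set.Ioi (0:ℝ), lam • (domOp A - domOp B)) :
    (⋃ lam ∈ Set.Ioi (0:ℝ), lam • (domOp A - domOp B)) =
      ⋃ lam ∈ Set.Ioi (0:ℝ), lam •
        (Prod.fst '' {q : X × StrongDual ℝ X | fitz A q < ⊤} -
          Prod.fst '' {q : X × StrongDual ℝ X | fitz B q < ⊤}) := by
  have hdom : domOp A - domOp B ⊆ (V : Set X) := fun z hz =>
    hVeq ▸ mem_iUnion₂.2 ⟨1, mem_Ioi.2 one_pos, by rwa [one_smul]⟩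
  apply subset_antisymm
  · exact iUnion₂_mono fun lam _ => smul_set_mono (sub_subset_sub
      hA.1.1.domOp_subset_fst_dom_fitz hB.1.1.domOp_subset_fst_dom_fitz)
  · rw [← hVeq]
    refine iUnion₂_subset fun lam _ => ?_
    rintro _ ⟨z, hz, rfl⟩
    exact V.smul_mem lam (closure_convexHull_sub_subset hVclosed hdom (sub_subset_sub
      hA.1.fst_dom_fitz_subset_closure_convexHull hB.1.fst_dom_fitz_subset_closure_convexHull hz))
end

section
/- Let X be a real Banach space and let A : X ⇉ X* be ultramaximally monotone with 0 ∈ dom A. Assume A is coercive in the sense that for every K > 0 there exists ρ > 0 such that ⟨a, a*⟩ ≥ K‖a‖ for every (a, a*) ∈ gra A with ‖a‖ ≥ ρ. Then ran A = X*. -/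
open Pointwise Set NormedSpace

variable {X : Type*} [NormedAddCommGroup X] [NormedSpace ℝ X]

/-!
Fix `x*`. By ultramaximality it suffices to find `z ∈ X**` with `⟨x* − a*, z⟩ ≥ ⟨x* − a*, a⟩` for all
`(a, a*) ∈ gra A`. By the Mazur–Orlicz form of the Hahn–Banach theorem such a `z` exists as soon as
`Σ λᵢ ⟨x* − aᵢ*, aᵢ⟩ ≤ R ‖Σ λᵢ (x* − aᵢ*)‖` for all finitely supported weights `λᵢ ≥ 0`. Monotonicity gives
`⟨Σ λᵢ aᵢ*, Σ λᵢ aᵢ⟩ ≤ (Σ λᵢ) Σ λᵢ ⟨aᵢ*, aᵢ⟩`, which reduces this to the termwise bound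
`⟨x* − a*, a⟩ + ‖a‖ ≤ R`. With `R = ρ (‖x*‖ + ‖y*‖ + 1)`, where `ρ` is the coercivity radius
for `K = ‖x*‖ + 1`, that bound comes from monotonicity against `(0, y*) ∈ gra A` when `‖a‖`
is small and from coercivity when `‖a‖` is large.
-/

theorem exists_strongDual_le_of_sublinear {E : Type*} [SeminormedAddCommGroup E]
    [NormedSpace ℝ E] (N : E → ℝ) (hN_smul : ∀ t : ℝ, 0 < t → ∀ x, N (t • x) = t * N x)
    (hN_add : ∀ x y, N (x + y) ≤ N x + N y) {R : ℝ} (hN_le : ∀ x, N x ≤ R * ‖x‖) :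
    ∃ f : StrongDual ℝ E, ∀ x, f x ≤ N x := by
  have hN_zero : N 0 = 0 := by
    have := hN_smul 2 two_pos 0
    rw [smul_zero] at this
    linarith
  obtain ⟨g, -, hg⟩ := exists_extension_of_le_sublinear ⟨⊥, 0⟩ N hN_smul hN_add fun x => by
    simp [(Submodule.mem_bot ℝ).1 x.2, hN_zero]
  have hg_le : ∀ x, g x ≤ R * ‖x‖ := fun x => (hg x).trans (hN_le x)
  exact ⟨g.mkContinuous R fun x => abs_le.2 ⟨neg_le.2 (by simpa using hg_le (-x)), hg_le x⟩, hg⟩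

theorem exists_strongDual_ge_of_forall_sum_le {E ι : Type*} [SeminormedAddCommGroup E]
    [NormedSpace ℝ E] (u : ι → E) (c : ι → ℝ) {R : ℝ} (hR : 0 ≤ R)
    (h : ∀ (s : Finset ι) (w : ι → ℝ), (∀ i ∈ s, 0 ≤ w i) →
      ∑ i ∈ s, w i * c i ≤ R * ‖∑ i ∈ s, w i • u i‖) :
    ∃ f : StrongDual ℝ E, ∀ i, c i ≤ f (u i) := by
  set U := Finsupp.linearCombination ℝ u
  set C := Finsupp.linearCombination ℝ c
  have hUC : ∀ w : ι →₀ ℝ, 0 ≤ w → C w ≤ R * ‖U w‖ := fun w hw => by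
    simpa [U, C, Finsupp.linearCombination_apply, Finsupp.sum] using h w.support w fun i _ => hw i
  have hlow : ∀ x (w : {w : ι →₀ ℝ // 0 ≤ w}), -(R * ‖x‖) ≤ R * ‖x + U w‖ - C w := by
    intro x w
    have hw := hUC w w.2
    have htri : ‖U w‖ ≤ ‖x + U w‖ + ‖x‖ := by simpa using norm_sub_le (x + U w) x
    nlinarith
  -- `N (-u i) ≤ -c i` (take `w = single i 1`), so every linear functional below `N` will do.
  let N : E → ℝ := fun x => ⨅ w : {w : ι →₀ ℝ // 0 ≤ w}, R * ‖x + U w‖ - C w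
  have hN_le : ∀ x (w : {w : ι →₀ ℝ // 0 ≤ w}), N x ≤ R * ‖x + U w‖ - C w :=
    fun x w => ciInf_le ⟨_, forall_mem_range.2 (hlow x)⟩ w
  have hN_add : ∀ x y, N (x + y) ≤ N x + N y := fun x y => le_ciInf_add_ciInf fun v w => by
    calc N (x + y) ≤ R * ‖x + y + U (v + w)‖ - C (v + w) :=
          hN_le _ ⟨v + w, add_nonneg v.2 w.2⟩
      _ ≤ _ := by
        rw [map_add, map_add, add_add_add_comm]
        nlinarith [norm_add_le (x + U v) (y + U w)]
  have hN_smul_le : ∀ t : ℝ, 0 < t → ∀ x, N (t • x) ≤ t * N x := by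
    intro t ht x
    rw [Real.mul_iInf_of_nonneg ht.le]
    refine le_ciInf fun w => ?_
    calc N (t • x) ≤ R * ‖t • x + U (t • w.1)‖ - C (t • w.1) :=
          hN_le _ ⟨t • w.1, smul_nonneg ht.le w.2⟩
      _ = t * (R * ‖x + U w‖ - C w) := by
        rw [map_smul, map_smul, ← smul_add, norm_smul, Real.norm_of_nonneg ht.le, smul_eq_mul]
        ring
  have hN_smul : ∀ t : ℝ, 0 < t → ∀ x, N (t • x) = t * N x := by
    refine fun t ht x => le_antisymm (hN_smul_le t ht x) ?_
    have := hN_smul_le t⁻¹ (inv_pos.2 ht) (t • x)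
    rwa [inv_smul_smul₀ ht.ne', le_inv_mul_iff₀ ht] at this
  obtain ⟨f, hf⟩ := exists_strongDual_le_of_sublinear N hN_smul hN_add
    fun x => by simpa using hN_le x ⟨0, le_rfl⟩
  refine ⟨f, fun i => ?_⟩
  have := (hf (-u i)).trans (hN_le (-u i) ⟨Finsupp.single i 1, Finsupp.single_nonneg.2 zero_le_one⟩)
  simpa [U, C] using this

theorem IsMonotoneOp.sum_smul_apply_sum_smul_le {A : Set (X × StrongDual ℝ X)}
    (hA : IsMonotoneOp A) {ι : Type*} {p : ι → X × StrongDual ℝ X} (hp : ∀ i, p i ∈ A)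
    (s : Finset ι) {w : ι → ℝ} (hw : ∀ i ∈ s, 0 ≤ w i) :
    (∑ i ∈ s, w i • (p i).2) (∑ i ∈ s, w i • (p i).1) ≤
      (∑ i ∈ s, w i) * ∑ i ∈ s, w i * (p i).2 (p i).1 := by
  -- The double sum expands to twice the right-hand side minus twice the left-hand side.
  have hvar : 0 ≤ ∑ i ∈ s, ∑ j ∈ s, w i * w j * ((p i).2 - (p j).2) ((p i).1 - (p j).1) :=
    Finset.sum_nonneg fun i hi => Finset.sum_nonneg fun j hj =>
      mul_nonneg (mul_nonneg (hw i hi) (hw j hj)) (hA _ (hp i) _ (hp j))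
  have hcross : ∑ i ∈ s, ∑ j ∈ s, w i * w j * (p j).2 (p i).1 =
      ∑ i ∈ s, ∑ j ∈ s, w i * w j * (p i).2 (p j).1 := by
    rw [Finset.sum_comm]; simp only [mul_comm (w _) (w _)]
  have hdiag : ∑ i ∈ s, ∑ j ∈ s, w i * w j * (p j).2 (p j).1 =
      ∑ i ∈ s, ∑ j ∈ s, w i * w j * (p i).2 (p i).1 := by
    rw [Finset.sum_comm]; simp only [mul_comm (w _) (w _)]
  simp only [map_sub, sub_apply, mul_sub, Finset.sum_sub_distrib, hcross, hdiag] at hvar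
  simp only [map_sum, map_smul, sum_apply, smul_apply, smul_eq_mul, Finset.mul_sum,
    Finset.sum_mul, ← mul_assoc, mul_comm (w _) (w _)]
  linarith

theorem IsMonotoneOp.sum_mul_sub_apply_le {A : Set (X × StrongDual ℝ X)}
    (hA : IsMonotoneOp A) {ι : Type*} {p : ι → X × StrongDual ℝ X} (hp : ∀ i, p i ∈ A)
    {xs : StrongDual ℝ X} {R : ℝ} (hR : 0 ≤ R)
    (hterm : ∀ i, (xs - (p i).2) (p i).1 + ‖(p i).1‖ ≤ R)
    (s : Finset ι) {w : ι → ℝ} (hw : ∀ i ∈ s, 0 ≤ w i) :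
    ∑ i ∈ s, w i * (xs - (p i).2) (p i).1 ≤ R * ‖∑ i ∈ s, w i • (xs - (p i).2)‖ := by
  set c := ∑ i ∈ s, w i * (xs - (p i).2) (p i).1
  set L := ∑ i ∈ s, w i
  set a := ∑ i ∈ s, w i • (p i).1
  set u := ∑ i ∈ s, w i • (xs - (p i).2)
  set N := ∑ i ∈ s, w i * ‖(p i).1‖
  have hL : 0 ≤ L := Finset.sum_nonneg hw
  have hN : 0 ≤ N := Finset.sum_nonneg fun i hi => mul_nonneg (hw i hi) (norm_nonneg _)
  have hmean : L * c ≤ u a := by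
    have hu : u = L • xs - ∑ i ∈ s, w i • (p i).2 := by
      simp only [u, L, smul_sub, Finset.sum_sub_distrib, Finset.sum_smul]
    have hc : c = xs a - ∑ i ∈ s, w i * (p i).2 (p i).1 := by
      simp only [c, a, sub_apply, mul_sub, Finset.sum_sub_distrib, map_sum, map_smul, smul_eq_mul]
    rw [hu, hc, sub_apply, smul_apply, smul_eq_mul]
    linear_combination hA.sum_smul_apply_sum_smul_le hp s hw
  have hbudget : c + N ≤ R * L := by
    simp only [c, N, L, ← Finset.sum_add_distrib, Finset.mul_sum]
    exact Finset.sum_le_sum fun i hi => by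
      rw [← mul_add, mul_comm R]; exact mul_le_mul_of_nonneg_left (hterm i) (hw i hi)
  have ha : ‖a‖ ≤ N := (norm_sum_le _ _).trans_eq <| Finset.sum_congr rfl fun i hi => by
    rw [norm_smul, Real.norm_of_nonneg (hw i hi)]
  have hua : u a ≤ ‖u‖ * N :=
    (le_abs_self _).trans <| (u.le_opNorm a).trans (mul_le_mul_of_nonneg_left ha (norm_nonneg u))
  -- `L c ≤ ‖u‖ N ≤ ‖u‖ (R L - c)`
  have hscaled : (L + ‖u‖) * c ≤ (L + ‖u‖) * (R * ‖u‖) := by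
    nlinarith [mul_le_mul_of_nonneg_left hbudget (norm_nonneg u),
      mul_nonneg (mul_nonneg hR (norm_nonneg u)) (norm_nonneg u)]
  rcases (add_nonneg hL (norm_nonneg u)).eq_or_lt with hzero | hpos
  · nlinarith [norm_nonneg u]
  · exact le_of_mul_le_mul_left hscaled hpos

theorem IsMonotoneOp.sub_apply_add_norm_le {A : Set (X × StrongDual ℝ X)} (hA : IsMonotoneOp A)
    {ys : StrongDual ℝ X} (h0 : ((0 : X), ys) ∈ A) (xs : StrongDual ℝ X) {ρ : ℝ} (hρ : 0 ≤ ρ)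
    (hco : ∀ p ∈ A, ρ ≤ ‖p.1‖ → (‖xs‖ + 1) * ‖p.1‖ ≤ p.2 p.1)
    {p : X × StrongDual ℝ X} (hp : p ∈ A) :
    (xs - p.2) p.1 + ‖p.1‖ ≤ ρ * (‖xs‖ + ‖ys‖ + 1) := by
  have hxs : xs p.1 ≤ ‖xs‖ * ‖p.1‖ := (le_abs_self _).trans (xs.le_opNorm _)
  rw [sub_apply]
  rcases lt_or_ge ‖p.1‖ ρ with hsmall | hbig
  · have hys : -(ys p.1) ≤ ‖ys‖ * ‖p.1‖ := (neg_le_abs _).trans (ys.le_opNorm _)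
    have hmono : 0 ≤ (p.2 - ys) p.1 := by simpa using hA p hp _ h0
    rw [sub_apply] at hmono
    nlinarith [mul_le_mul_of_nonneg_left hsmall.le (by positivity : 0 ≤ ‖xs‖ + ‖ys‖ + 1)]
  · nlinarith [hco p hp hbig, mul_nonneg hρ (by positivity : 0 ≤ ‖xs‖ + ‖ys‖ + 1)]

theorem stmt7_general (A : Set (X × StrongDual ℝ X)) (hA : IsUltraMaxMonotone A)
    (h0 : (0 : X) ∈ domOp A)
    (hcoercive : ∀ K : ℝ, 0 < K → ∃ ρ : ℝ, 0 < ρ ∧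
      ∀ p ∈ A, ρ ≤ ‖p.1‖ → K * ‖p.1‖ ≤ p.2 p.1) :
    ranOp A = Set.univ := by
  refine Set.eq_univ_of_forall fun xs => ?_
  obtain ⟨ys, hys⟩ := h0
  obtain ⟨ρ, hρ, hco⟩ := hcoercive (‖xs‖ + 1) (by positivity)
  have hR : 0 ≤ ρ * (‖xs‖ + ‖ys‖ + 1) := by positivity
  obtain ⟨z, hz⟩ := exists_strongDual_ge_of_forall_sum_le (fun q : A => xs - q.1.2)
    (fun q => (xs - q.1.2) q.1.1) hR fun s _ hw =>
      hA.1.sum_mul_sub_apply_le (p := Subtype.val) Subtype.prop hR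
        (fun q => hA.1.sub_apply_add_norm_le hys xs hρ.le hco q.2) s hw
  obtain ⟨x, -, hx⟩ := hA.2 z xs fun q hq => by
    simpa [NormedSpace.dual_def] using hz ⟨q, hq⟩
  exact ⟨x, hx⟩

theorem stmt7 [CompleteSpace X] (A : Set (X × StrongDual ℝ X)) (hA : IsUltraMaxMonotone A)
    (h0 : (0 : X) ∈ domOp A)
    (hcoercive : ∀ K : ℝ, 0 < K → ∃ ρ : ℝ, 0 < ρ ∧
      ∀ p ∈ A, ρ ≤ ‖p.1‖ → K * ‖p.1‖ ≤ p.2 p.1) :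
    ranOp A = Set.univ :=
  stmt7_general A hA h0 hcoercive
end

section
/- Let X be a real Banach space, let A : X ⇉ X* be ultramaximally monotone, and let (x, x*) ∈ X × X*. Then there exists (a, a*) ∈ gra A such that ‖x* − a*‖ = ‖x − a‖ and ‖x − a‖² + ‖x* − a*‖² + 2⟨x − a, x* − a*⟩ = 0. -/
open Pointwise Set NormedSpace

variable {X : Type*} [NormedAddCommGroup X] [NormedSpace ℝ X]

/-!
Translating `A` reduces the claim to `(x, x*) = 0`, where it asks for `(a, a*) ∈ gra A` with
`⟨a, a*⟩ + ½‖a‖² + ½‖a*‖² ≤ 0`. Maximal monotonicity makes the Fitzpatrick function `F_A`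
dominate the duality pairing, so `F_A + ½‖·‖² + ½‖·‖² ≥ 0` on `X × X*`. Separating the hypograph
of `-F_A` from the open strict epigraph of the quadratic (Hahn–Banach) yields an affine function
between them, i.e. `(y*, y**) ∈ X* × X**` with
`⟨a, y*⟩ + ⟨a*, y**⟩ - ⟨a, a*⟩ + ½‖y*‖² + ½‖y**‖² ≤ 0` for all `(a, a*) ∈ gra A`. This makes
`(y**, y*)` monotonically related to `gra A` in `X** × X*`; ultramaximality gives `y** = ŷ` with
`(y, y*) ∈ gra A`, and the inequality at `(a, a*) = (y, y*)` is the claim.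
-/

section Duality

variable {E : Type*} [NormedAddCommGroup E] [NormedSpace ℝ E]

theorem convexOn_univ_half_sq_norm : ConvexOn ℝ univ fun x : E => ‖x‖ ^ 2 / 2 :=
  (((convexOn_norm convex_univ).pow (fun _ _ => norm_nonneg _) 2).smul
    (by norm_num : (0 : ℝ) ≤ 1 / 2)).congr fun x _ => by
      simp only [one_div, Pi.pow_apply, smul_eq_mul]
      ring

theorem ConvexOn.exists_affine_between {h : E → ℝ} (hconv : ConvexOn ℝ univ h)
    (hcont : Continuous h) {V : Set (E × ℝ)} (hV : Convex ℝ V) (hVne : V.Nonempty)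
    (hle : ∀ p ∈ V, p.2 ≤ h p.1) :
    ∃ (φ : StrongDual ℝ E) (c : ℝ), (∀ p ∈ V, p.2 ≤ φ p.1 + c) ∧ ∀ z, φ z + c ≤ h z := by
  set U : Set (E × ℝ) := {p | p.1 ∈ univ ∧ h p.1 < p.2}
  have hUo : IsOpen U := by
    simpa [U] using isOpen_lt (hcont.comp continuous_fst) continuous_snd
  have hdisj : Disjoint U V := disjoint_left.2 fun p hpU hpV => (hle p hpV).not_gt hpU.2
  obtain ⟨f, u, hfU, hfV⟩ := geometric_hahn_banach_open hconv.convex_strict_epigraph hUo hV hdisj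
  set α := f (0, 1)
  set φ := f.comp (ContinuousLinearMap.inl ℝ E ℝ)
  have hf : ∀ p : E × ℝ, f p = φ p.1 + p.2 * α := fun p => by
    rw [← f.comp_inl_add_comp_inr, ← smul_eq_mul, ← map_smul]
    simp [φ]
  have hα : α < 0 := by
    obtain ⟨p, hp⟩ := hVne
    have hU := hfU (p.1, h p.1 + 1) ⟨trivial, lt_add_one _⟩
    have hV := hfV p hp
    rw [hf] at hU hV
    by_contra! hα
    nlinarith [mul_nonneg (sub_nonneg.2 (hle p hp)) hα]
  have hφc : ∀ z, ((-α)⁻¹ • φ) z + u / α = (φ z - u) / -α := fun z => by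
    simp only [smul_apply, smul_eq_mul]
    field_simp
    ring
  refine ⟨(-α)⁻¹ • φ, u / α, fun p hp => ?_, fun z => ?_⟩
  · rw [hφc, le_div_iff₀ (neg_pos.2 hα)]
    linarith [hf p ▸ hfV p hp]
  · rw [hφc]
    refine le_of_forall_gt_imp_ge_of_dense fun t ht => ?_
    rw [div_le_iff₀ (neg_pos.2 hα)]
    linarith [hf (z, t) ▸ hfU (z, t) ⟨trivial, ht⟩]

theorem ContinuousLinearMap.sq_norm_sub_opNorm_le (f : StrongDual ℝ E) (x : E) :
    (‖x‖ - ‖f‖) ^ 2 ≤ ‖x‖ ^ 2 + ‖f‖ ^ 2 + 2 * f x := by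
  have := neg_le_of_abs_le (f.le_opNorm x)
  nlinarith

theorem ContinuousLinearMap.half_sq_norm_le_of_forall_apply_le (f : StrongDual ℝ E) {D : ℝ}
    (h : ∀ v, f v ≤ ‖v‖ ^ 2 / 2 + D) : ‖f‖ ^ 2 / 2 ≤ D := by
  have hD : 0 ≤ D := by simpa using h 0
  have hsq : ∀ v, f v ^ 2 ≤ 2 * D * ‖v‖ ^ 2 := fun v => by
    have := discrim_le_zero (a := ‖v‖ ^ 2 / 2) (b := -f v) (c := D) fun t => by
      have := h (t • v)
      rw [map_smul, norm_smul, Real.norm_eq_abs, mul_pow, sq_abs, smul_eq_mul] at this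
      linarith
    rw [discrim] at this
    linarith
  have hnorm : ‖f‖ ≤ √(2 * D) := f.opNorm_le_bound (Real.sqrt_nonneg _) fun v => by
    rw [Real.norm_eq_abs, ← Real.sqrt_sq (norm_nonneg v), ← Real.sqrt_mul (by positivity)]
    exact Real.abs_le_sqrt (hsq v)
  have := pow_le_pow_left₀ (norm_nonneg f) hnorm 2
  rw [Real.sq_sqrt (by positivity)] at this
  linarith

theorem ContinuousLinearMap.half_sq_norm_comp_inl_add_le {F : Type*} [NormedAddCommGroup F]
    [NormedSpace ℝ F] (φ : StrongDual ℝ (E × F)) {D : ℝ}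
    (h : ∀ v w, φ (v, w) ≤ ‖v‖ ^ 2 / 2 + ‖w‖ ^ 2 / 2 + D) :
    ‖φ.comp (.inl ℝ E F)‖ ^ 2 / 2 + ‖φ.comp (.inr ℝ E F)‖ ^ 2 / 2 ≤ D := by
  set φ₁ := φ.comp (.inl ℝ E F)
  set φ₂ := φ.comp (.inr ℝ E F)
  have hφ : ∀ v w, φ (v, w) = φ₁ v + φ₂ w := fun v w => (φ.comp_inl_add_comp_inr (v, w)).symm
  have hφ₂ : ∀ w, φ₂ w ≤ ‖w‖ ^ 2 / 2 + (D - ‖φ₁‖ ^ 2 / 2) := fun w => by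
    have := φ₁.half_sq_norm_le_of_forall_apply_le (D := ‖w‖ ^ 2 / 2 + D - φ₂ w) fun v => by
      linarith [hφ v w ▸ h v w]
    linarith
  linarith [φ₂.half_sq_norm_le_of_forall_apply_le hφ₂]

end Duality

section Monotone

variable {A : Set (X × StrongDual ℝ X)}

theorem IsMonotoneOp.apply_add_apply_sub_le (hA : IsMonotoneOp A) {p q : X × StrongDual ℝ X}
    (hp : p ∈ A) (hq : q ∈ A) : q.2 p.1 + p.2 q.1 - p.2 p.1 ≤ q.2 q.1 := by
  have := hA q hq p hp
  simp only [map_sub, sub_apply] at this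
  linarith

theorem IsMonotoneOp.preimage_add (hA : IsMonotoneOp A) (c : X × StrongDual ℝ X) :
    IsMonotoneOp ((· + c) ⁻¹' A) := fun p hp q hq => by
  simpa using hA _ hp _ hq

theorem IsUltraMaxMonotone.preimage_add (hA : IsUltraMaxMonotone A) (c : X × StrongDual ℝ X) :
    IsUltraMaxMonotone ((· + c) ⁻¹' A) := by
  refine ⟨hA.1.preimage_add c, fun F f hF => ?_⟩
  obtain ⟨a, ha, hmem⟩ := hA.2 (F + inclusionInDoubleDual ℝ X c.1) (f + c.2) fun p hp => by
    have e₁ : F + inclusionInDoubleDual ℝ X c.1 - inclusionInDoubleDual ℝ X p.1 =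
        F - inclusionInDoubleDual ℝ X (p - c).1 := by
      rw [Prod.fst_sub, map_sub]; abel
    have e₂ : f + c.2 - p.2 = f - (p - c).2 := by rw [Prod.snd_sub]; abel
    rw [e₁, e₂]
    exact hF (p - c) (by simpa using hp)
  refine ⟨a - c.1, by rw [map_sub, ← ha]; abel, ?_⟩
  show (a - c.1 + c.1, f + c.2) ∈ A
  rwa [sub_add_cancel]

theorem IsUltraMaxMonotone.isMaxMonotone (hA : IsUltraMaxMonotone A) : IsMaxMonotone A := by
  refine ⟨hA.1, fun x xs hx => ?_⟩
  obtain ⟨a, ha, hmem⟩ := hA.2 (inclusionInDoubleDual ℝ X x) xs fun p hp => by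
    rw [← map_sub (inclusionInDoubleDual ℝ X)]
    exact hx p hp
  rwa [(inclusionInDoubleDualLi ℝ).injective ha]

theorem IsMaxMonotone.apply_le_of_forall_le (hA : IsMaxMonotone A) {z : X × StrongDual ℝ X}
    {s : ℝ} (h : ∀ q ∈ A, z.2 q.1 + q.2 z.1 - q.2 q.1 ≤ s) : z.2 z.1 ≤ s := by
  by_contra! hlt
  have hz : z ∈ A := hA.2 z.1 z.2 fun q hq => by
    simp only [map_sub, sub_apply]
    linarith [h q hq]
  linarith [h z hz]

end Monotone

section Surjectivity

variable {A : Set (X × StrongDual ℝ X)}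

open ContinuousLinearMap in
theorem IsMaxMonotone.exists_forall_apply_add_half_sq_le (hA : IsMaxMonotone A) :
    ∃ (ys : StrongDual ℝ X) (F : StrongDual ℝ (StrongDual ℝ X)),
      ∀ q ∈ A, ys q.1 + F q.2 - q.2 q.1 + (‖ys‖ ^ 2 / 2 + ‖F‖ ^ 2 / 2) ≤ 0 := by
  set h : X × StrongDual ℝ X → ℝ := fun z => ‖z.1‖ ^ 2 / 2 + ‖z.2‖ ^ 2 / 2
  -- the hypograph of `-F_A`
  set V : Set ((X × StrongDual ℝ X) × ℝ) :=
    {p | ∀ q ∈ A, p.1.2 q.1 + q.2 p.1.1 - q.2 q.1 ≤ -p.2}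
  have hconv : ConvexOn ℝ univ h :=
    (convexOn_univ_half_sq_norm.comp_linearMap (LinearMap.fst ℝ X (StrongDual ℝ X))).add
      (convexOn_univ_half_sq_norm.comp_linearMap (LinearMap.snd ℝ X (StrongDual ℝ X)))
  have hV : Convex ℝ V := by
    intro p hp p' hp' a b ha hb hab q hq
    have := add_le_add (mul_le_mul_of_nonneg_left (hp q hq) ha)
      (mul_le_mul_of_nonneg_left (hp' q hq) hb)
    simp only [Prod.fst_add, Prod.snd_add, Prod.smul_fst, Prod.smul_snd, map_add, map_smul,
      add_apply, smul_apply, smul_eq_mul]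
    linear_combination this + q.2 q.1 * hab
  have hmemV : ∀ q ∈ A, (q, -q.2 q.1) ∈ V := fun q hq q' hq' => by
    simpa using hA.1.apply_add_apply_sub_le hq' hq
  have hle : ∀ p ∈ V, p.2 ≤ h p.1 := fun p hp => by
    have := hA.apply_le_of_forall_le hp
    show p.2 ≤ ‖p.1.1‖ ^ 2 / 2 + ‖p.1.2‖ ^ 2 / 2
    nlinarith [p.1.2.sq_norm_sub_opNorm_le p.1.1]
  obtain ⟨q₀, hq₀⟩ := hA.nonempty
  obtain ⟨φ, c, hφV, hφh⟩ :=
    hconv.exists_affine_between (by fun_prop) hV ⟨_, hmemV q₀ hq₀⟩ hle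
  set φ₁ : StrongDual ℝ X := φ.comp (inl ℝ X (StrongDual ℝ X))
  set φ₂ : StrongDual ℝ (StrongDual ℝ X) := φ.comp (inr ℝ X (StrongDual ℝ X))
  have hφ : ‖φ₁‖ ^ 2 / 2 + ‖φ₂‖ ^ 2 / 2 ≤ -c :=
    φ.half_sq_norm_comp_inl_add_le fun v w => by
      have := hφh (v, w)
      dsimp only [h] at this
      linarith
  refine ⟨-φ₁, -φ₂, fun q hq => ?_⟩
  have := φ.comp_inl_add_comp_inr q ▸ hφV _ (hmemV q hq)
  have h₂ : ‖-φ₂‖ = ‖φ₂‖ := norm_neg φ₂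
  rw [neg_apply, neg_apply, norm_neg, h₂]
  linarith

theorem IsUltraMaxMonotone.exists_mem_apply_add_half_sq_le (hA : IsUltraMaxMonotone A) :
    ∃ p ∈ A, p.2 p.1 + (‖p.1‖ ^ 2 / 2 + ‖p.2‖ ^ 2 / 2) ≤ 0 := by
  obtain ⟨ys, F, hF⟩ := hA.isMaxMonotone.exists_forall_apply_add_half_sq_le
  obtain ⟨a, rfl, ha⟩ := hA.2 F ys fun q hq => by
    have := F.sq_norm_sub_opNorm_le ys
    simp only [map_sub, sub_apply, dual_def]
    nlinarith [hF q hq]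
  have hnorm : ‖inclusionInDoubleDual ℝ X a‖ = ‖a‖ := (inclusionInDoubleDualLi ℝ).norm_map a
  have := hF _ ha
  rw [dual_def, hnorm] at this
  exact ⟨(a, ys), ha, by dsimp only at this ⊢; linarith⟩

theorem IsUltraMaxMonotone.exists_mem_norm_eq (hA : IsUltraMaxMonotone A) :
    ∃ p ∈ A, ‖p.2‖ = ‖p.1‖ ∧ ‖p.1‖ ^ 2 + ‖p.2‖ ^ 2 + 2 * p.2 p.1 = 0 := by
  obtain ⟨p, hp, hle⟩ := hA.exists_mem_apply_add_half_sq_le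
  have hsq := p.2.sq_norm_sub_opNorm_le p.1
  have heq : ‖p.1‖ ^ 2 + ‖p.2‖ ^ 2 + 2 * p.2 p.1 = 0 :=
    le_antisymm (by linarith) (by nlinarith [sq_nonneg (‖p.1‖ - ‖p.2‖)])
  refine ⟨p, hp, ?_, heq⟩
  nlinarith [sq_nonneg (‖p.1‖ - ‖p.2‖)]

end Surjectivity

theorem stmt11_general (A : Set (X × StrongDual ℝ X)) (hA : IsUltraMaxMonotone A)
    (x : X) (xs : StrongDual ℝ X) :
    ∃ p ∈ A, ‖xs - p.2‖ = ‖x - p.1‖ ∧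
      ‖x - p.1‖ ^ 2 + ‖xs - p.2‖ ^ 2 + 2 * (xs - p.2) (x - p.1) = 0 := by
  obtain ⟨q, hq, hnorm, heq⟩ := (hA.preimage_add (x, xs)).exists_mem_norm_eq
  refine ⟨q + (x, xs), hq, ?_⟩
  simpa [sub_add_cancel_right] using ⟨hnorm, heq⟩

theorem stmt11 [CompleteSpace X] (A : Set (X × StrongDual ℝ X)) (hA : IsUltraMaxMonotone A)
    (x : X) (xs : StrongDual ℝ X) :
    ∃ p ∈ A, ‖xs - p.2‖ = ‖x - p.1‖ ∧
      ‖x - p.1‖ ^ 2 + ‖xs - p.2‖ ^ 2 + 2 * (xs - p.2) (x - p.1) = 0 :=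
  stmt11_general A hA x xs
end
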